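/- For r ≥ 2, the pure monomial braid group P(r,2) is isomorphic to ℤ × F_{r+1}, where F_{r+1} is the free group of rank r+1, and Aut(P(r,2)) ≅ ℤ^{r+1} ⋊ (ℤ/2ℤ × Aut(F_{r+1})) for a suitable action of ℤ/2ℤ × Aut(F_{r+1}) on ℤ^{r+1}. -/

import Mathlib

/-!
The monomial braid group `B(r,n)` (independent of `r`) is presented with generators
`ρ_0, …, ρ_{n-1}` and relations `(ρ_0ρ_1)^2 = (ρ_1ρ_0)^2`,
`ρ_iρ_{i+1}ρ_i = ρ_{i+1}ρ_iρ_{i+1}` (`1 ≤ i ≤ n-2`), `ρ_iρ_j = ρ_jρ_i` (`|i-j| > 1`).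
We realize it as a presented group on generators indexed by `ℕ`, where the superfluous
generators `ρ_k` for `k ≥ n` are killed by extra relators.  The full monomial group
`G(r,n)` is the quotient of `B(r,n)` by the relations `ρ_0^r = ρ_1^2 = ⋯ = ρ_{n-1}^2 = 1`,
and the pure monomial braid group `P(r,n)` is the kernel of the quotient map.
-/

namespace MonomialBraid

/-- Generator `ρ_k` of the free group. -/
def g (k : ℕ) : FreeGroup ℕ := FreeGroup.of k

/-- Relators of the monomial braid group `B(r,n)` (independent of `r`),
together with relators killing the junk generators `ρ_k`, `k ≥ n`. -/
def brels (n : ℕ) : Set (FreeGroup ℕ) :=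
  {w | ∃ k, n ≤ k ∧ w = g k} ∪
  {w | 2 ≤ n ∧ w = (g 0 * g 1) ^ 2 * ((g 1 * g 0) ^ 2)⁻¹} ∪
  {w | ∃ i, 1 ≤ i ∧ i + 1 ≤ n - 1 ∧
      w = g i * g (i + 1) * g i * (g (i + 1) * g i * g (i + 1))⁻¹} ∪
  {w | ∃ i j, i + 2 ≤ j ∧ j ≤ n - 1 ∧ w = g i * g j * (g j * g i)⁻¹}

/-- The monomial braid group `B(r,n)` (independent of `r`). -/
abbrev B (n : ℕ) := PresentedGroup (brels n)

/-- The generator `ρ_k` of `B(r,n)`. -/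
def rh (n k : ℕ) : B n := PresentedGroup.of k

/-- `ζ_n = (ρ_0 ρ_1 ⋯ ρ_{n-1})^n`. -/
def zeta (n : ℕ) : B n := (((List.range n).map (rh n)).prod) ^ n

/-- `X_i = ρ_{i-1} ⋯ ρ_2 ρ_1 ρ_0 ρ_1 ρ_2 ⋯ ρ_{i-1}` for `1 ≤ i ≤ n`. -/
def XX (n i : ℕ) : B n :=
  (((List.range (i - 1)).reverse.map fun k => rh n (k + 1)).prod) * rh n 0 *
    (((List.range (i - 1)).map fun k => rh n (k + 1)).prod)

/-- `C_j = ρ_{j-1} ⋯ ρ_2 ρ_1 ρ_0^r ρ_1⁻¹ ρ_2⁻¹ ⋯ ρ_{j-1}⁻¹` for `1 ≤ j ≤ n`. -/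
def CC (r n j : ℕ) : B n :=
  (((List.range (j - 1)).reverse.map fun k => rh n (k + 1)).prod) * rh n 0 ^ r *
    ((((List.range (j - 1)).reverse.map fun k => rh n (k + 1)).prod))⁻¹

/-- `A^{(q)}(i,j) = X_i^{q-r} ⋅ ρ_{j-1} ⋯ ρ_{i+1} ρ_i^2 ρ_{i+1}⁻¹ ⋯ ρ_{j-1}⁻¹ ⋅ X_i^{r-q}`
for `1 ≤ i < j ≤ n`, `1 ≤ q ≤ r`. -/
def Aq (r n i j q : ℕ) : B n :=
  XX n i ^ ((q : ℤ) - (r : ℤ)) *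
    ((((List.range (j - 1 - i)).reverse.map fun k => rh n (i + 1 + k)).prod) * rh n i ^ 2 *
      ((((List.range (j - 1 - i)).reverse.map fun k => rh n (i + 1 + k)).prod))⁻¹) *
    XX n i ^ ((r : ℤ) - (q : ℤ))

/-- `A^{[q]}(i,j) = A^{(q)}(i,j) A^{(q+1)}(i,j) ⋯ A^{(r-1)}(i,j)` (for `q < r`). -/
def Abr (r n i j q : ℕ) : B n :=
  ((List.range (r - q)).map fun t => Aq r n i j (q + t)).prod

/-- `V^{(q)}(i,j) = A^{(q)}(i,j) A^{(q)}(i+1,j) ⋯ A^{(q)}(j-1,j)`. -/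
def VV (r n i j q : ℕ) : B n :=
  ((List.range (j - i)).map fun t => Aq r n (i + t) j q).prod

/-- `D_k = A^{[1]}(k-1,k) A^{[1]}(k-2,k) ⋯ A^{[1]}(1,k) ⋅ C_k ⋅ V^{(r)}(1,k)`. -/
def DD (r n k : ℕ) : B n :=
  (((List.range (k - 1)).map fun t => Abr r n (k - 1 - t) k 1).prod) * CC r n k * VV r n 1 k r

/-- The relations defining the full monomial group `G(r,n)` as a quotient of `B(r,n)`:
`ρ_0^r = ρ_1^2 = ⋯ = ρ_{n-1}^2 = 1`. -/
def grels (r n : ℕ) : Set (B n) :=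
  {w | w = rh n 0 ^ r} ∪ {w | ∃ i, 1 ≤ i ∧ i ≤ n - 1 ∧ w = rh n i ^ 2}

/-- The normal closure of the relations of `G(r,n)` in `B(r,n)`; thus
`G(r,n) = B(r,n) ⧸ NG r n`. -/
def NG (r n : ℕ) : Subgroup (B n) := Subgroup.normalClosure (grels r n)

instance NG_normal (r n : ℕ) : (NG r n).Normal := Subgroup.normalClosure_normal

/-- The pure monomial braid group `P(r,n)`, the kernel of the quotient map
`B(r,n) → G(r,n)`. -/
def Pm (r n : ℕ) : Subgroup (B n) := MonoidHom.ker (QuotientGroup.mk' (NG r n))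


/-! ### Auxiliary development -/

section Aux
open Multiplicative SemidirectProduct
open FreeGroup (freeGroupCongr freeGroupCongr_trans freeGroupCongr_refl)

def zmodF {X : Type*} [Group X] (n : ℕ) (x : X) (h : x ^ n = 1) :
    {f : ℤ →+ Additive X // f n = 0} :=
  ⟨(zmultiplesHom (Additive X)) (Additive.ofMul x), by
    simp only [zmultiplesHom_apply]
    rw [← ofMul_zpow, zpow_natCast, h]; rfl⟩

/-- Hom out of `Multiplicative (ZMod n)` from an element of order dividing `n`. -/
def zmodHom {X : Type*} [Group X] (n : ℕ) (x : X) (h : x ^ n = 1) :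
    Multiplicative (ZMod n) →* X :=
  AddMonoidHom.toMultiplicativeLeft (ZMod.lift n (zmodF n x h))

lemma zmodHom_intCast {X : Type*} [Group X] (n : ℕ) (x : X) (h : x ^ n = 1) (c : ℤ) :
    zmodHom n x h (ofAdd ((c : ZMod n))) = x ^ c := by
  show Additive.toMul ((ZMod.lift n (zmodF n x h)) ((c : ℤ) : ZMod n)) = x ^ c
  rw [ZMod.lift_coe]
  show Additive.toMul ((c : ℤ) • Additive.ofMul x) = x ^ c
  rw [← ofMul_zpow]; rfl

lemma zmodHom_one {X : Type*} [Group X] (n : ℕ) (x : X) (h : x ^ n = 1) :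
    zmodHom n x h (ofAdd (1 : ZMod n)) = x := by
  have h1 : ((1 : ℤ) : ZMod n) = (1 : ZMod n) := by push_cast; ring
  rw [← h1, zmodHom_intCast, zpow_one]

/-- Restricting a hom along an isomorphism of domains gives isomorphic kernels. -/
def kerCompEquiv {G G' X : Type*} [Group G] [Group G'] [Group X] (e : G ≃* G') (f : G' →* X) :
    MonoidHom.ker (f.comp e.toMonoidHom) ≃* MonoidHom.ker f where
  toFun x := ⟨e x.1, by
    have hx : f (e x.1) = 1 := MonoidHom.mem_ker.1 x.2
    exact MonoidHom.mem_ker.2 hx⟩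
  invFun y := ⟨e.symm y.1, by
    refine MonoidHom.mem_ker.2 ?_
    show f (e (e.symm y.1)) = 1
    rw [MulEquiv.apply_symm_apply]
    exact MonoidHom.mem_ker.1 y.2⟩
  left_inv x := by ext; simp
  right_inv y := by ext; simp
  map_mul' x y := by ext; exact map_mul e x.1 y.1

/-- An injective hom onto a subgroup gives an isomorphism with that subgroup. -/
noncomputable def restrictEquiv {G H : Type*} [Group G] [Group H] (j : G →* H) (S : Subgroup H)
    (hinj : Function.Injective j) (hmem : ∀ g, j g ∈ S) (hsurj : ∀ s : S, ∃ g, j g = (s : H)) :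
    G ≃* S :=
  MulEquiv.ofBijective (j.codRestrict S hmem)
    ⟨fun a b hab => hinj (congrArg Subtype.val hab),
     fun s => (hsurj s).imp fun g hg => Subtype.ext hg⟩

lemma conj_zpow_eq {X : Type*} [Group X] {x y : X} (h : Commute x y) (m : ℤ) :
    x ^ m * y * (x ^ m)⁻¹ = y := by
  rw [(h.zpow_left m).eq, mul_inv_cancel_right]

/-! ### The free group on two generators and the swap automorphism -/

abbrev F2 := FreeGroup Bool

def x0 : F2 := FreeGroup.of false
def y0 : F2 := FreeGroup.of true

def notEquiv : Bool ≃ Bool := ⟨Bool.not, Bool.not, Bool.not_not, Bool.not_not⟩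

def swA : MulAut F2 := freeGroupCongr notEquiv

lemma swA_of (b : Bool) : swA (FreeGroup.of b) = FreeGroup.of (!b) := by
  simp [swA, notEquiv]

lemma swA_x0 : swA x0 = y0 := swA_of false

lemma swA_y0 : swA y0 = x0 := swA_of true

lemma swA_sq : swA ^ 2 = 1 := by
  have h : notEquiv.trans notEquiv = Equiv.refl Bool := by
    ext b; cases b <;> rfl
  rw [sq]
  show (freeGroupCongr notEquiv).trans (freeGroupCongr notEquiv) = 1
  rw [freeGroupCongr_trans, h, freeGroupCongr_refl]
  rfl

lemma swA_even (m : ℤ) : swA ^ (2 * m) = 1 := by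
  have h2 : swA ^ (2 : ℤ) = 1 := by
    rw [show ((2:ℤ)) = ((2:ℕ):ℤ) by norm_num, zpow_natCast, swA_sq]
  rw [zpow_mul, h2, one_zpow]

lemma swA_odd (m : ℤ) : swA ^ (2 * m + 1) = swA := by
  rw [zpow_add, swA_even, one_mul, zpow_one]

def sw : Multiplicative ℤ →* MulAut F2 := zpowersHom _ swA

lemma sw_apply (n : ℤ) : sw (ofAdd n) = swA ^ n := rfl

abbrev HH := F2 ⋊[sw] Multiplicative ℤ

/-! ### Basic facts in `B 2` -/

lemma mk_rel_eq_one {w : FreeGroup ℕ} (hw : w ∈ brels 2) :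
    PresentedGroup.mk (brels 2) w = 1 :=
  (QuotientGroup.eq_one_iff _).2 (Subgroup.subset_normalClosure hw)

lemma rh_junk {k : ℕ} (hk : 2 ≤ k) : rh 2 k = 1 :=
  mk_rel_eq_one (Or.inl (Or.inl (Or.inl ⟨k, hk, rfl⟩)))

abbrev aB : B 2 := rh 2 0
abbrev bB : B 2 := rh 2 1
def uB : B 2 := aB * bB
def zB : B 2 := uB ^ 2

lemma relmain : (aB * bB) ^ 2 = (bB * aB) ^ 2 := by
  have h := mk_rel_eq_one (Or.inl (Or.inl (Or.inr ⟨le_rfl, rfl⟩)))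
  simp only [_root_.map_mul, _root_.map_inv, _root_.map_pow, mul_inv_eq_one] at h
  exact h

lemma z_comm_a : Commute zB aB := by
  show zB * aB = aB * zB
  show (aB * bB) ^ 2 * aB = aB * (aB * bB) ^ 2
  conv_rhs => rw [relmain]
  simp only [sq, mul_assoc]

lemma z_comm_b : Commute zB bB := by
  show zB * bB = bB * zB
  show (aB * bB) ^ 2 * bB = bB * (aB * bB) ^ 2
  conv_lhs => rw [relmain]
  simp only [sq, mul_assoc]

lemma z_comm_u : Commute zB uB := by
  show zB * uB = uB * zB
  show uB ^ 2 * uB = uB * uB ^ 2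
  rw [← pow_succ, ← pow_succ']

def baseB : F2 →* B 2 :=
  FreeGroup.lift fun b => if b then uB * aB * uB⁻¹ else aB

lemma baseB_false : baseB (FreeGroup.of false) = aB := by simp [baseB]

lemma baseB_true : baseB (FreeGroup.of true) = uB * aB * uB⁻¹ := by simp [baseB]

lemma baseB_x0 : baseB x0 = aB := baseB_false

lemma baseB_y0 : baseB y0 = uB * aB * uB⁻¹ := baseB_true

lemma z_comm_base (w : F2) : Commute zB (baseB w) := by
  induction w using FreeGroup.induction_on with
  | C1 => rw [_root_.map_one]; exact Commute.one_right zB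
  | of b =>
      show Commute zB (baseB (FreeGroup.of b))
      cases b
      · rw [baseB_false]; exact z_comm_a
      · rw [baseB_true]
        exact (z_comm_u.mul_right z_comm_a).mul_right z_comm_u.inv_right
  | inv_of b hb =>
      rw [_root_.map_inv]; exact hb.inv_right
  | mul v w hv hw =>
      rw [_root_.map_mul]; exact hv.mul_right hw

lemma conj_u_base (b : Bool) : uB * baseB (FreeGroup.of b) * uB⁻¹ = baseB (FreeGroup.of (!b)) := by
  cases b
  · show uB * baseB (FreeGroup.of false) * uB⁻¹ = baseB (FreeGroup.of true)
    rw [baseB_false, baseB_true]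
  · show uB * baseB (FreeGroup.of true) * uB⁻¹ = baseB (FreeGroup.of false)
    rw [baseB_true, baseB_false]
    have : uB * (uB * aB * uB⁻¹) * uB⁻¹ = zB * aB * zB⁻¹ := by
      show _ = uB ^ 2 * aB * (uB ^ 2)⁻¹
      rw [pow_two, mul_inv_rev]
      simp only [mul_assoc]
    rw [this, z_comm_a.eq, mul_inv_cancel_right]

lemma uB_zpow_even (m : ℤ) : uB ^ (2 * m) = zB ^ m := by
  show _ = (uB ^ 2) ^ m
  rw [← zpow_natCast uB 2, ← zpow_mul]
  norm_num

lemma uB_zpow_odd (m : ℤ) : uB ^ (2 * m + 1) = zB ^ m * uB := by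
  rw [zpow_add, uB_zpow_even, zpow_one]

lemma compatPsi : ∀ q : Multiplicative ℤ,
    baseB.comp ((sw q) : MulAut F2).toMonoidHom
      = (MulAut.conj ((zpowersHom (B 2) uB) q)).toMonoidHom.comp baseB := by
  intro q
  apply FreeGroup.ext_hom
  intro b
  simp only [MonoidHom.comp_apply, MulEquiv.coe_toMonoidHom, MulAut.conj_apply, zpowersHom_apply]
  show baseB ((swA ^ (q.toAdd)) (FreeGroup.of b))
      = uB ^ q.toAdd * baseB (FreeGroup.of b) * (uB ^ q.toAdd)⁻¹
  rcases Int.even_or_odd q.toAdd with ⟨m, hm⟩ | ⟨m, hm⟩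
  · rw [show q.toAdd = 2 * m by omega, swA_even, uB_zpow_even]
    rw [conj_zpow_eq (z_comm_base _) m]
    rfl
  · rw [show q.toAdd = 2 * m + 1 by omega, swA_odd, uB_zpow_odd, swA_of]
    have hg : zB ^ m * uB * baseB (FreeGroup.of b) * (zB ^ m * uB)⁻¹
        = zB ^ m * (uB * baseB (FreeGroup.of b) * uB⁻¹) * (zB ^ m)⁻¹ := by
      simp only [mul_inv_rev, mul_assoc]
    rw [hg, conj_u_base, conj_zpow_eq (z_comm_base _) m]

end Aux

section Aux2
open Multiplicative SemidirectProduct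

def fPhi : ℕ → HH := fun k =>
  if k = 0 then inl x0 else if k = 1 then (inl x0)⁻¹ * inr (ofAdd 1) else 1

lemma inr_inl_comm (w : F2) :
    inr (ofAdd (1:ℤ)) * inl w = (inl (swA w) : HH) * inr (ofAdd 1) := by
  have h : (inl (sw (ofAdd (1:ℤ)) w) : HH) = inr (ofAdd 1) * inl w * inr (ofAdd 1)⁻¹ :=
    SemidirectProduct.inl_aut _ _
  rw [show sw (ofAdd (1:ℤ)) w = swA w from by rw [sw_apply, zpow_one]] at h
  rw [h, mul_assoc, ← _root_.map_mul, inv_mul_cancel]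
  simp

lemma sq_inl_inr (v : F2) :
    ((inl v : HH) * inr (ofAdd 1)) ^ 2 = inl (v * swA v) * inr (ofAdd 1 * ofAdd 1) := by
  rw [sq, mul_assoc, ← mul_assoc (inr (ofAdd (1:ℤ))), inr_inl_comm,
    mul_assoc (inl (swA v)), ← _root_.map_mul (inr : Multiplicative ℤ →* HH),
    ← mul_assoc, ← _root_.map_mul (inl : F2 →* HH)]

lemma hPhi : ∀ rel ∈ brels 2, FreeGroup.lift fPhi rel = 1 := by
  rintro rel (((⟨k, hk, rfl⟩ | ⟨-, rfl⟩) | ⟨i, hi1, hi2, rfl⟩) | ⟨i, j, hij, hj, rfl⟩)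
  · show FreeGroup.lift fPhi (FreeGroup.of k) = 1
    rw [FreeGroup.lift_apply_of]
    simp [fPhi, show k ≠ 0 by omega, show k ≠ 1 by omega]
  · have e0 : FreeGroup.lift fPhi (g 0) = inl x0 := by
      show FreeGroup.lift fPhi (FreeGroup.of 0) = _
      rw [FreeGroup.lift_apply_of]; simp [fPhi]
    have e1 : FreeGroup.lift fPhi (g 1) = (inl x0)⁻¹ * inr (ofAdd 1) := by
      show FreeGroup.lift fPhi (FreeGroup.of 1) = _
      rw [FreeGroup.lift_apply_of]; simp [fPhi]
    simp only [_root_.map_mul, _root_.map_inv, _root_.map_pow, e0, e1, mul_inv_eq_one]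
    have h01 : (inl x0 : HH) * ((inl x0)⁻¹ * inr (ofAdd 1)) = inr (ofAdd 1) := by
      rw [mul_inv_cancel_left]
    have h10 : ((inl x0)⁻¹ * inr (ofAdd 1) : HH) * inl x0
        = inl (x0⁻¹ * swA x0) * inr (ofAdd 1) := by
      rw [mul_assoc, inr_inl_comm, ← mul_assoc, ← _root_.map_inv (inl : F2 →* HH),
        ← _root_.map_mul (inl : F2 →* HH)]
    rw [h01, h10, sq_inl_inr]
    have hsw : (x0⁻¹ * swA x0) * swA (x0⁻¹ * swA x0) = 1 := by
      calc (x0⁻¹ * swA x0) * swA (x0⁻¹ * swA x0)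
          = (x0⁻¹ * swA x0) * (swA x0⁻¹ * swA (swA x0)) := by rw [_root_.map_mul]
        _ = (x0⁻¹ * y0) * ((swA x0)⁻¹ * swA y0) := by rw [_root_.map_inv, swA_x0]
        _ = (x0⁻¹ * y0) * (y0⁻¹ * x0) := by rw [swA_x0, swA_y0]
        _ = 1 := by group
    rw [hsw, sq, _root_.map_mul]
    simp
  · omega
  · omega

def PhiFwd : B 2 →* HH := PresentedGroup.toGroup hPhi

lemma PhiFwd_a : PhiFwd aB = inl x0 := by
  show PresentedGroup.toGroup hPhi (PresentedGroup.of 0) = _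
  rw [PresentedGroup.toGroup.of]; simp [fPhi]

lemma PhiFwd_b : PhiFwd bB = (inl x0)⁻¹ * inr (ofAdd 1) := by
  show PresentedGroup.toGroup hPhi (PresentedGroup.of 1) = _
  rw [PresentedGroup.toGroup.of]; simp [fPhi]

lemma PhiFwd_u : PhiFwd uB = inr (ofAdd 1) := by
  rw [show uB = aB * bB from rfl, _root_.map_mul, PhiFwd_a, PhiFwd_b, mul_inv_cancel_left]

def PsiH : HH →* B 2 := SemidirectProduct.lift baseB (zpowersHom _ uB) compatPsi

lemma PsiH_inl (w : F2) : PsiH (inl w) = baseB w := by simp [PsiH]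

lemma PsiH_inr : PsiH (inr (ofAdd (1:ℤ))) = uB := by
  simp [PsiH]

lemma hPsiPhi : PsiH.comp PhiFwd = MonoidHom.id (B 2) := by
  apply PresentedGroup.ext
  intro k
  simp only [MonoidHom.comp_apply, MonoidHom.id_apply]
  match k with
  | 0 =>
      show PsiH (PhiFwd aB) = aB
      rw [PhiFwd_a, PsiH_inl, baseB_x0]
  | 1 =>
      show PsiH (PhiFwd bB) = bB
      rw [PhiFwd_b, _root_.map_mul, _root_.map_inv, PsiH_inl, PsiH_inr, baseB_x0]
      show aB⁻¹ * (aB * bB) = bB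
      group
  | (k+2) =>
      show PsiH (PhiFwd (rh 2 (k+2))) = rh 2 (k+2)
      rw [rh_junk (by omega), _root_.map_one, _root_.map_one]

lemma hPhiPsi : PhiFwd.comp PsiH = MonoidHom.id HH := by
  apply SemidirectProduct.hom_ext
  · apply FreeGroup.ext_hom
    intro b
    simp only [MonoidHom.comp_apply, MonoidHom.id_apply]
    rw [PsiH_inl]
    cases b
    · rw [baseB_false, PhiFwd_a]; rfl
    · rw [baseB_true, _root_.map_mul, _root_.map_mul, _root_.map_inv, PhiFwd_u, PhiFwd_a,
        inr_inl_comm, mul_inv_cancel_right, swA_x0]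
      rfl
  · apply MonoidHom.ext_mint
    simp only [MonoidHom.comp_apply, MonoidHom.id_apply]
    rw [PsiH_inr, PhiFwd_u]

/-- `B 2` is isomorphic to `F₂ ⋊ ℤ`. -/
def PhiB : B 2 ≃* HH := MonoidHom.toMulEquiv PhiFwd PsiH hPsiPhi hPhiPsi

lemma PhiB_a : PhiB aB = inl x0 := PhiFwd_a
lemma PhiB_b : PhiB bB = (inl x0)⁻¹ * inr (ofAdd 1) := PhiFwd_b

end Aux2

section Aux3
open Multiplicative SemidirectProduct

lemma conjaut {X : Type*} [Group X] (c x : X) (n : ℕ) :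
    (c * x * c⁻¹) ^ n = c * x ^ n * c⁻¹ := by
  simpa [MulAut.conj_apply] using (map_pow (MulAut.conj c) x n).symm

lemma zmodHom_apply' {X : Type*} [Group X] (n : ℕ) (x : X) (h : x ^ n = 1)
    (a : Multiplicative (ZMod n)) :
    zmodHom n x h a = x ^ ((ZMod.cast (toAdd a) : ℤ)) := by
  have : a = ofAdd (((ZMod.cast (toAdd a) : ℤ) : ZMod n)) := by
    rw [ZMod.intCast_zmod_cast]; rfl
  rw [this, zmodHom_intCast]
  rw [← this]

abbrev Pair (r : ℕ) := Multiplicative (ZMod r × ZMod r)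

def swapP (r : ℕ) : MulAut (Pair r) :=
  AddEquiv.toMultiplicative (AddEquiv.prodComm : ZMod r × ZMod r ≃+ ZMod r × ZMod r)

lemma swapP_apply (r : ℕ) (a b : ZMod r) : swapP r (ofAdd (a, b)) = ofAdd (b, a) := rfl

lemma swapP_sq (r : ℕ) : swapP r ^ 2 = 1 := by
  rw [sq]
  ext z <;>
  rfl

def phiG (r : ℕ) : Multiplicative (ZMod 2) →* MulAut (Pair r) :=
  zmodHom 2 (swapP r) (swapP_sq r)

abbrev GG (r : ℕ) := Pair r ⋊[phiG r] Multiplicative (ZMod 2)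

def e1 (r : ℕ) : Pair r := ofAdd (1, 0)
def e2 (r : ℕ) : Pair r := ofAdd (0, 1)
def sG : Multiplicative (ZMod 2) := ofAdd 1

lemma phiG_s (r : ℕ) : phiG r sG = swapP r := zmodHom_one _ _ _

lemma sG_sq : sG * sG = 1 := by
  show ofAdd ((1 : ZMod 2) + 1) = ofAdd 0
  norm_num
  decide

lemma inr_inl_commG (r : ℕ) (v : Pair r) :
    inr sG * inl v = (inl (swapP r v) : GG r) * inr sG := by
  have h : (inl (phiG r sG v) : GG r) = inr sG * inl v * inr sG⁻¹ :=
    SemidirectProduct.inl_aut _ _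
  rw [phiG_s] at h
  rw [h, mul_assoc, ← _root_.map_mul, inv_mul_cancel]
  simp

lemma sq_inl_inrG (r : ℕ) (v : Pair r) :
    ((inl v : GG r) * inr sG) ^ 2 = inl (v * swapP r v) * inr (sG * sG) := by
  rw [sq, mul_assoc, ← mul_assoc (inr sG), inr_inl_commG,
    mul_assoc (inl (swapP r v)), ← _root_.map_mul (inr : Multiplicative (ZMod 2) →* GG r),
    ← mul_assoc, ← _root_.map_mul (inl : Pair r →* GG r)]

def fPi (r : ℕ) : ℕ → GG r := fun k =>
  if k = 0 then inl (e1 r) else if k = 1 then inr sG else 1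

lemma hPi (r : ℕ) : ∀ rel ∈ brels 2, FreeGroup.lift (fPi r) rel = 1 := by
  rintro rel (((⟨k, hk, rfl⟩ | ⟨-, rfl⟩) | ⟨i, hi1, hi2, rfl⟩) | ⟨i, j, hij, hj, rfl⟩)
  · show FreeGroup.lift (fPi r) (FreeGroup.of k) = 1
    rw [FreeGroup.lift_apply_of]
    simp [fPi, show k ≠ 0 by omega, show k ≠ 1 by omega]
  · have e0 : FreeGroup.lift (fPi r) (g 0) = inl (e1 r) := by
      show FreeGroup.lift (fPi r) (FreeGroup.of 0) = _
      rw [FreeGroup.lift_apply_of]; simp [fPi]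
    have e1' : FreeGroup.lift (fPi r) (g 1) = inr sG := by
      show FreeGroup.lift (fPi r) (FreeGroup.of 1) = _
      rw [FreeGroup.lift_apply_of]; simp [fPi]
    simp only [_root_.map_mul, _root_.map_inv, _root_.map_pow, e0, e1', mul_inv_eq_one]
    have h10 : (inr sG : GG r) * inl (e1 r) = inl (e2 r) * inr sG := by
      rw [inr_inl_commG]; rfl
    rw [h10, sq_inl_inrG, sq_inl_inrG]
    rw [show e1 r * swapP r (e1 r) = e2 r * swapP r (e2 r) from by
      show ofAdd (((1:ZMod r),(0:ZMod r)) + ((0:ZMod r),(1:ZMod r)))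
          = ofAdd (((0:ZMod r),(1:ZMod r)) + ((1:ZMod r),(0:ZMod r)))
      rw [add_comm]]
  · omega
  · omega

def PiB (r : ℕ) : B 2 →* GG r := PresentedGroup.toGroup (hPi r)

lemma PiB_a (r : ℕ) : PiB r aB = inl (e1 r) := by
  show PresentedGroup.toGroup (hPi r) (PresentedGroup.of 0) = _
  rw [PresentedGroup.toGroup.of]; simp [fPi]

lemma PiB_b (r : ℕ) : PiB r bB = inr sG := by
  show PresentedGroup.toGroup (hPi r) (PresentedGroup.of 1) = _
  rw [PresentedGroup.toGroup.of]; simp [fPi]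

lemma e1_pow_r (r : ℕ) : e1 r ^ r = 1 := by
  show ofAdd ((1:ZMod r),(0:ZMod r)) ^ r = 1
  rw [← ofAdd_nsmul, ← ofAdd_zero]
  congr 1
  rw [Prod.smul_mk]
  rw [smul_zero, nsmul_eq_mul, mul_one, ZMod.natCast_self]
  rfl

lemma sG_pow_two : sG ^ 2 = 1 := by rw [sq, sG_sq]

lemma grels_sub (r : ℕ) : grels r 2 ⊆ (MonoidHom.ker (PiB r) : Set (B 2)) := by
  rintro w (rfl | ⟨i, hi1, hi2, rfl⟩)
  · show PiB r (rh 2 0 ^ r) = 1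
    rw [_root_.map_pow, PiB_a, ← _root_.map_pow (inl : Pair r →* GG r), e1_pow_r, _root_.map_one]
  · have hi : i = 1 := by omega
    subst hi
    show PiB r (rh 2 1 ^ 2) = 1
    rw [_root_.map_pow, PiB_b, ← _root_.map_pow (inr : Multiplicative (ZMod 2) →* GG r),
      sG_pow_two, _root_.map_one]

/-! ### the quotient `B 2 / NG r 2` receives a hom from `GG r` -/

def mkQ (r : ℕ) : B 2 →* B 2 ⧸ NG r 2 := QuotientGroup.mk' (NG r 2)
def P0 (r : ℕ) : B 2 ⧸ NG r 2 := mkQ r aB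
def P1 (r : ℕ) : B 2 ⧸ NG r 2 := mkQ r bB
def P101 (r : ℕ) : B 2 ⧸ NG r 2 := P1 r * P0 r * P1 r

lemma P101_def (r : ℕ) : P101 r = P1 r * P0 r * P1 r := rfl

lemma hP0r (r : ℕ) : P0 r ^ r = 1 := by
  show (mkQ r) aB ^ r = 1
  rw [← _root_.map_pow]
  refine (QuotientGroup.eq_one_iff _).2 ?_
  exact Subgroup.subset_normalClosure (Or.inl rfl)

lemma hP1sq (r : ℕ) : P1 r ^ 2 = 1 := by
  show (mkQ r) bB ^ 2 = 1
  rw [← _root_.map_pow]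
  refine (QuotientGroup.eq_one_iff _).2 ?_
  exact Subgroup.subset_normalClosure (Or.inr ⟨1, le_rfl, by norm_num, rfl⟩)

lemma hP1inv (r : ℕ) : (P1 r)⁻¹ = P1 r := by
  have h := hP1sq r
  rw [sq] at h
  exact inv_eq_of_mul_eq_one_right h

lemma hbraidQ (r : ℕ) : (P0 r * P1 r) ^ 2 = (P1 r * P0 r) ^ 2 := by
  show ((mkQ r) aB * (mkQ r) bB) ^ 2 = ((mkQ r) bB * (mkQ r) aB) ^ 2
  have h := congrArg (mkQ r) relmain
  simpa only [_root_.map_mul, _root_.map_pow] using h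

lemma hcommQ (r : ℕ) : Commute (P0 r) (P101 r) := by
  have h := hbraidQ r
  rw [sq, sq] at h
  show P0 r * P101 r = P101 r * P0 r
  rw [P101_def]
  simp only [mul_assoc] at h ⊢
  exact h

lemma hP101r (r : ℕ) : P101 r ^ r = 1 := by
  have : P101 r = P1 r * P0 r * (P1 r)⁻¹ := by rw [hP1inv, P101_def]
  rw [this, conjaut, hP0r, mul_one, mul_inv_cancel]

def tau1 (r : ℕ) : Pair r →* B 2 ⧸ NG r 2 :=
  ((zmodHom r (P0 r) (hP0r r)).noncommCoprod (zmodHom r (P101 r) (hP101r r))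
    (fun a b => by
      rw [zmodHom_apply', zmodHom_apply']
      exact (hcommQ r).zpow_zpow _ _)).comp
    (MulEquiv.prodMultiplicative (ZMod r) (ZMod r)).toMonoidHom

lemma tau1_apply (r : ℕ) (a b : ZMod r) :
    tau1 r (ofAdd (a, b)) = zmodHom r (P0 r) (hP0r r) (ofAdd a)
      * zmodHom r (P101 r) (hP101r r) (ofAdd b) := by
  simp [tau1, MonoidHom.noncommCoprod_apply]

def tau2 (r : ℕ) : Multiplicative (ZMod 2) →* B 2 ⧸ NG r 2 :=
  zmodHom 2 (P1 r) (hP1sq r)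

lemma conjP1_P0 (r : ℕ) : P1 r * P0 r * (P1 r)⁻¹ = P101 r := by
  rw [hP1inv, P101_def]

lemma conjP1_P101 (r : ℕ) : P1 r * P101 r * (P1 r)⁻¹ = P0 r := by
  rw [hP1inv, P101_def]
  have h := hP1sq r
  rw [sq] at h
  calc P1 r * (P1 r * P0 r * P1 r) * P1 r
      = P1 r * P1 r * P0 r * (P1 r * P1 r) := by simp only [mul_assoc]
    _ = P0 r := by rw [h, one_mul, mul_one]

lemma zmod2_cases (c : ZMod 2) : c = 0 ∨ c = 1 := by
  revert c
  decide

lemma tauCompat (r : ℕ) : ∀ q : Multiplicative (ZMod 2),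
    (tau1 r).comp ((phiG r q) : MulAut (Pair r)).toMonoidHom
      = (MulAut.conj (tau2 r q)).toMonoidHom.comp (tau1 r) := by
  intro q
  refine MonoidHom.ext fun z => ?_
  obtain ⟨a, b, rfl⟩ : ∃ a b, z = ofAdd (a, b) := ⟨(toAdd z).1, (toAdd z).2, rfl⟩
  simp only [MonoidHom.comp_apply, MulEquiv.coe_toMonoidHom, MulAut.conj_apply]
  rcases zmod2_cases (toAdd q) with hq | hq
  · have hq' : q = 1 := by
      have : q = ofAdd (toAdd q) := rfl
      rw [this, hq, ofAdd_zero]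
    subst hq'
    simp
  · have hq' : q = sG := by
      have : q = ofAdd (toAdd q) := rfl
      rw [this, hq]; rfl
    subst hq'
    rw [phiG_s, swapP_apply, tau1_apply, tau1_apply]
    simp only [zmodHom_apply', toAdd_ofAdd]
    rw [show tau2 r sG = P1 r from zmodHom_one _ _ _]
    have d1 : ∀ (x : B 2 ⧸ NG r 2) (m : ℤ),
        P1 r * x ^ m * (P1 r)⁻¹ = (P1 r * x * (P1 r)⁻¹) ^ m := fun x m => by
      simpa [MulAut.conj_apply] using (map_zpow (MulAut.conj (P1 r)) x m).symm
    have hsplit : P1 r * (P0 r ^ (ZMod.cast a : ℤ) * P101 r ^ (ZMod.cast b : ℤ)) * (P1 r)⁻¹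
        = (P1 r * P0 r ^ (ZMod.cast a : ℤ) * (P1 r)⁻¹)
          * (P1 r * P101 r ^ (ZMod.cast b : ℤ) * (P1 r)⁻¹) := by
      group
    rw [hsplit, d1, d1, conjP1_P0, conjP1_P101]
    exact ((hcommQ r).zpow_zpow _ _).eq

def tauG (r : ℕ) : GG r →* B 2 ⧸ NG r 2 :=
  SemidirectProduct.lift (tau1 r) (tau2 r) (tauCompat r)

lemma tau_Pi (r : ℕ) : (tauG r).comp (PiB r) = mkQ r := by
  apply PresentedGroup.ext
  intro k
  simp only [MonoidHom.comp_apply]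
  match k with
  | 0 =>
      show tauG r (PiB r aB) = mkQ r aB
      rw [PiB_a]
      rw [show (tauG r) (inl (e1 r)) = tau1 r (e1 r) from SemidirectProduct.lift_inl _ _ _ _]
      show tau1 r (e1 r) = P0 r
      rw [show e1 r = ofAdd ((1 : ZMod r), (0 : ZMod r)) from rfl, tau1_apply, zmodHom_one,
        ofAdd_zero, _root_.map_one, mul_one]
  | 1 =>
      show tauG r (PiB r bB) = mkQ r bB
      rw [PiB_b]
      rw [show (tauG r) (inr sG) = tau2 r sG from SemidirectProduct.lift_inr _ _ _ _]
      show tau2 r sG = P1 r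
      exact zmodHom_one _ _ _
  | (k+2) =>
      show tauG r (PiB r (rh 2 (k+2))) = mkQ r (rh 2 (k+2))
      rw [rh_junk (by omega), _root_.map_one, _root_.map_one, _root_.map_one]

lemma Pm_eq_ker (r : ℕ) : Pm r 2 = MonoidHom.ker (PiB r) := by
  ext x
  constructor
  · intro hx
    have hmem : x ∈ NG r 2 := by
      rw [← QuotientGroup.ker_mk' (NG r 2)]
      exact hx
    have hle : NG r 2 ≤ MonoidHom.ker (PiB r) :=
      Subgroup.normalClosure_le_normal (grels_sub r)
    exact hle hmem
  · intro hx
    have h1 : PiB r x = 1 := hx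
    refine MonoidHom.mem_ker.mpr ?_
    show mkQ r x = 1
    have := congrArg (fun (f : B 2 →* B 2 ⧸ NG r 2) => f x) (tau_Pi r)
    simp only [MonoidHom.comp_apply] at this
    rw [← this, h1, _root_.map_one]

end Aux3

section Aux4
open Multiplicative SemidirectProduct

def abH (r : ℕ) : F2 →* Pair r := FreeGroup.lift (fun b => if b then e2 r else e1 r)

lemma abH_x0 (r : ℕ) : abH r x0 = e1 r := by simp [abH, x0]
lemma abH_y0 (r : ℕ) : abH r y0 = e2 r := by simp [abH, y0]

def uGG (r : ℕ) : GG r := inl (e1 r) * inr sG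

def cG (r : ℕ) : Pair r := e1 r * e2 r

lemma uGG_sq (r : ℕ) : uGG r ^ 2 = inl (cG r) := by
  rw [show uGG r = inl (e1 r) * inr sG from rfl, sq_inl_inrG, sG_sq, _root_.map_one, mul_one]
  rfl

lemma uGG_zpow_even (r : ℕ) (m : ℤ) : uGG r ^ (2 * m) = inl (cG r ^ m) := by
  rw [zpow_mul, show ((2:ℤ)) = ((2:ℕ):ℤ) by norm_num, zpow_natCast, uGG_sq,
    ← _root_.map_zpow]

lemma uGG_zpow_odd (r : ℕ) (m : ℤ) : uGG r ^ (2 * m + 1) = inl (cG r ^ m) * uGG r := by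
  rw [zpow_add, uGG_zpow_even, zpow_one]

lemma inl_conj (r : ℕ) (x v : Pair r) : (inl x : GG r) * inl v * (inl x)⁻¹ = inl v := by
  rw [← _root_.map_inv, ← _root_.map_mul, ← _root_.map_mul, mul_comm x v,
    mul_inv_cancel_right]

lemma conj_uGG_inl (r : ℕ) (v : Pair r) :
    uGG r * inl v * (uGG r)⁻¹ = inl (swapP r v) := by
  have h1 : (inr sG : GG r) * inl v * inr sG⁻¹ = inl (phiG r sG v) :=
    (SemidirectProduct.inl_aut _ _).symm
  calc uGG r * inl v * (uGG r)⁻¹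
      = inl (e1 r) * (inr sG * inl v * inr sG⁻¹) * (inl (e1 r))⁻¹ := by
        show inl (e1 r) * inr sG * inl v * (inl (e1 r) * inr sG)⁻¹ = _
        rw [mul_inv_rev, ← _root_.map_inv (inr : Multiplicative (ZMod 2) →* GG r)]
        simp only [mul_assoc]
    _ = inl (e1 r) * inl (phiG r sG v) * (inl (e1 r))⁻¹ := by rw [h1]
    _ = inl (swapP r v) := by rw [phiG_s, inl_conj]

lemma abH_not (r : ℕ) (b : Bool) :
    abH r (FreeGroup.of (!b)) = swapP r (abH r (FreeGroup.of b)) := by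
  cases b
  · show abH r y0 = swapP r (abH r x0)
    rw [abH_x0, abH_y0]; rfl
  · show abH r x0 = swapP r (abH r y0)
    rw [abH_x0, abH_y0]; rfl

lemma compatPiH (r : ℕ) : ∀ q : Multiplicative ℤ,
    ((inl : Pair r →* GG r).comp (abH r)).comp ((sw q) : MulAut F2).toMonoidHom
      = (MulAut.conj ((zpowersHom (GG r) (uGG r)) q)).toMonoidHom.comp
          ((inl : Pair r →* GG r).comp (abH r)) := by
  intro q
  apply FreeGroup.ext_hom
  intro b
  simp only [MonoidHom.comp_apply, MulEquiv.coe_toMonoidHom, MulAut.conj_apply,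
    zpowersHom_apply]
  show inl (abH r ((swA ^ (q.toAdd)) (FreeGroup.of b)))
      = uGG r ^ q.toAdd * inl (abH r (FreeGroup.of b)) * (uGG r ^ q.toAdd)⁻¹
  rcases Int.even_or_odd q.toAdd with ⟨m, hm⟩ | ⟨m, hm⟩
  · rw [show q.toAdd = 2 * m by omega, swA_even, uGG_zpow_even, inl_conj]
    rfl
  · rw [show q.toAdd = 2 * m + 1 by omega, swA_odd, uGG_zpow_odd, swA_of, abH_not]
    have hg : inl (cG r ^ m) * uGG r * inl (abH r (FreeGroup.of b)) * (inl (cG r ^ m) * uGG r)⁻¹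
        = inl (cG r ^ m) * (uGG r * inl (abH r (FreeGroup.of b)) * (uGG r)⁻¹)
          * (inl (cG r ^ m))⁻¹ := by
      simp only [mul_inv_rev, mul_assoc]
    rw [hg, conj_uGG_inl, inl_conj]

def piH (r : ℕ) : HH →* GG r :=
  SemidirectProduct.lift ((inl : Pair r →* GG r).comp (abH r)) (zpowersHom _ (uGG r))
    (compatPiH r)

lemma piH_inl (r : ℕ) (w : F2) : piH r (inl w) = inl (abH r w) := by simp [piH]

lemma piH_inr (r : ℕ) (q : Multiplicative ℤ) : piH r (inr q) = uGG r ^ (toAdd q) := by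
  simp [piH]

lemma rightHom_uGG (r : ℕ) : rightHom (uGG r) = sG := by
  rw [show uGG r = inl (e1 r) * inr sG from rfl, _root_.map_mul, rightHom_inl, rightHom_inr,
    one_mul]

lemma PiB_eq (r : ℕ) : PiB r = (piH r).comp PhiB.toMonoidHom := by
  apply PresentedGroup.ext
  intro k
  simp only [MonoidHom.comp_apply, MulEquiv.coe_toMonoidHom]
  match k with
  | 0 =>
      show PiB r aB = piH r (PhiB aB)
      rw [PiB_a, PhiB_a, piH_inl, abH_x0]
  | 1 =>
      show PiB r bB = piH r (PhiB bB)
      rw [PiB_b, PhiB_b, _root_.map_mul, _root_.map_inv, piH_inl, abH_x0]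
      rw [piH_inr, show toAdd (ofAdd (1:ℤ)) = 1 from rfl, zpow_one,
        show uGG r = inl (e1 r) * inr sG from rfl, inv_mul_cancel_left]
  | (k+2) =>
      show PiB r (rh 2 (k+2)) = piH r (PhiB (rh 2 (k+2)))
      rw [rh_junk (by omega)]
      simp

/-- transfer of `Pm r 2` along `PhiB`. -/
def equiv1 (r : ℕ) : ↥(Pm r 2) ≃* ↥(MonoidHom.ker (piH r)) :=
  (MulEquiv.subgroupCongr (by rw [Pm_eq_ker r, PiB_eq r])).trans
    (kerCompEquiv PhiB (piH r))

end Aux4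

section Aux5
open Multiplicative SemidirectProduct

abbrev Dgrp := F2 × Multiplicative ℤ

def jD : Dgrp →* HH :=
  MonoidHom.mk' (fun p => ⟨p.1, ofAdd (2 * toAdd p.2)⟩) (by
    rintro ⟨w, m⟩ ⟨w', m'⟩
    have hact : sw (ofAdd (2 * toAdd m)) w' = w' := by
      rw [sw_apply, swA_even]; rfl
    refine SemidirectProduct.ext ?_ ?_
    · show w * w' = w * sw (ofAdd (2 * toAdd m)) w'
      rw [hact]
    · show ofAdd (2 * (toAdd m + toAdd m')) = ofAdd (2 * toAdd m) * ofAdd (2 * toAdd m')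
      rw [← ofAdd_add]
      ring_nf)

lemma jD_apply (w : F2) (m : ℤ) : jD (w, ofAdd m) = ⟨w, ofAdd (2 * m)⟩ := rfl

lemma jD_inj : Function.Injective jD := by
  rintro ⟨w, m⟩ ⟨w', m'⟩ h
  have h1 : w = w' := congrArg SemidirectProduct.left h
  have h2 : (2 : ℤ) * toAdd m = 2 * toAdd m' := congrArg (fun x => toAdd (SemidirectProduct.right x)) h
  have h3 : m = m' := by
    have : toAdd m = toAdd m' := by omega
    exact toAdd.injective this
  exact Prod.ext h1 h3

def castP (r : ℕ) : Multiplicative (ℤ × ℤ) →* Pair r :=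
  AddMonoidHom.toMultiplicative ((Int.castAddHom (ZMod r)).prodMap (Int.castAddHom (ZMod r)))

lemma castP_apply (r : ℕ) (p q : ℤ) :
    castP r (ofAdd (p, q)) = ofAdd (((p : ZMod r), (q : ZMod r))) := rfl

def AZ : F2 →* Multiplicative (ℤ × ℤ) :=
  FreeGroup.lift (fun b => if b then ofAdd ((0:ℤ), (1:ℤ)) else ofAdd ((1:ℤ), (0:ℤ)))

def A1 (w : F2) : ℤ := (toAdd (AZ w)).1
def A2 (w : F2) : ℤ := (toAdd (AZ w)).2

lemma A1_mul (v w : F2) : A1 (v * w) = A1 v + A1 w := by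
  show (toAdd (AZ (v * w))).1 = _
  rw [_root_.map_mul]
  rfl

lemma A2_mul (v w : F2) : A2 (v * w) = A2 v + A2 w := by
  show (toAdd (AZ (v * w))).2 = _
  rw [_root_.map_mul]
  rfl

lemma abH_eq (r : ℕ) : abH r = (castP r).comp AZ := by
  apply FreeGroup.ext_hom
  intro b
  cases b
  · show abH r x0 = castP r (AZ x0)
    rw [abH_x0, show AZ x0 = ofAdd ((1:ℤ), (0:ℤ)) from by simp [AZ, x0], castP_apply]
    show ofAdd ((1 : ZMod r), (0 : ZMod r)) = _
    norm_num
  · show abH r y0 = castP r (AZ y0)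
    rw [abH_y0, show AZ y0 = ofAdd ((0:ℤ), (1:ℤ)) from by simp [AZ, y0], castP_apply]
    show ofAdd ((0 : ZMod r), (1 : ZMod r)) = _
    norm_num

def abDZ : Dgrp →* Multiplicative (ℤ × ℤ) :=
  (AZ.comp (MonoidHom.fst _ _)) *
    ((zpowersHom _ (ofAdd ((1:ℤ),(1:ℤ)))).comp (MonoidHom.snd _ _))

lemma abDZ_apply (w : F2) (m : ℤ) :
    abDZ (w, ofAdd m) = ofAdd ((A1 w + m, A2 w + m)) := by
  show AZ w * (ofAdd ((1:ℤ),(1:ℤ))) ^ m = _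
  rw [← ofAdd_zsmul]
  show ofAdd (toAdd (AZ w) + m • ((1:ℤ),(1:ℤ))) = _
  have hs : m • ((1:ℤ),(1:ℤ)) = (m, m) := by
    rw [Prod.smul_mk]; simp
  rw [hs]
  rfl

def abD (r : ℕ) : Dgrp →* Pair r := (castP r).comp abDZ

lemma piH_jD (r : ℕ) : (piH r).comp jD = (inl : Pair r →* GG r).comp (abD r) := by
  apply MonoidHom.ext
  rintro ⟨w, m⟩
  have hsplit : ((w, m) : Dgrp) = (w, (1 : Multiplicative ℤ)) * ((1 : F2), m) := by
    refine Prod.ext ?_ ?_ <;> simp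
  rw [hsplit, _root_.map_mul, _root_.map_mul]
  have h1 : ((piH r).comp jD) (w, (1 : Multiplicative ℤ))
      = ((inl : Pair r →* GG r).comp (abD r)) (w, 1) := by
    show (piH r) (jD (w, (1 : Multiplicative ℤ))) = inl (abD r (w, 1))
    rw [show jD (w, (1:Multiplicative ℤ)) = inl w from by
      rw [show (1 : Multiplicative ℤ) = ofAdd 0 from rfl, jD_apply]
      norm_num]
    rw [piH_inl]
    show inl (abH r w) = inl (castP r (abDZ (w, ofAdd 0)))
    rw [abDZ_apply, abH_eq r]
    show inl (castP r (AZ w)) = _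
    congr 2
    show AZ w = ofAdd (A1 w + 0, A2 w + 0)
    rw [add_zero, add_zero]
    rfl
  have h2 : ((piH r).comp jD) ((1 : F2), m)
      = ((inl : Pair r →* GG r).comp (abD r)) ((1 : F2), m) := by
    show (piH r) (jD ((1:F2), m)) = inl (abD r ((1:F2), m))
    rw [show jD ((1:F2), m) = inr (ofAdd (2 * toAdd m)) from rfl]
    rw [piH_inr, show toAdd (ofAdd ((2:ℤ) * toAdd m)) = 2 * toAdd m from rfl, uGG_zpow_even]
    rw [show abD r ((1:F2), m) = castP r (abDZ ((1:F2), ofAdd (toAdd m))) from rfl, abDZ_apply]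
    congr 1
    show cG r ^ toAdd m = _
    rw [show A1 (1:F2) = 0 from by simp [A1], show A2 (1:F2) = 0 from by simp [A2]]
    rw [show cG r = castP r (ofAdd ((1:ℤ),(1:ℤ))) from by
      rw [castP_apply]
      show ofAdd (((1:ZMod r),(0:ZMod r)) + ((0:ZMod r),(1:ZMod r))) = _
      norm_num]
    rw [← _root_.map_zpow, ← ofAdd_zsmul]
    congr 2
    rw [Prod.smul_mk]
    refine Prod.ext ?_ ?_ <;> simp [mul_comm]
  rw [h1, h2]

lemma inl_injG (r : ℕ) : Function.Injective (inl : Pair r → GG r) :=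
  SemidirectProduct.inl_injective

/-- `ker (abD r)` is isomorphic to `ker (piH r)` via `jD`. -/
noncomputable def equiv2 (r : ℕ) : ↥(MonoidHom.ker (abD r)) ≃* ↥(MonoidHom.ker (piH r)) := by
  refine restrictEquiv (jD.comp (MonoidHom.ker (abD r)).subtype) (MonoidHom.ker (piH r))
    (fun a b hab => Subtype.ext (jD_inj (by exact hab))) ?_ ?_
  · rintro ⟨d, hd⟩
    refine MonoidHom.mem_ker.mpr ?_
    show piH r (jD d) = 1
    rw [show piH r (jD d) = ((piH r).comp jD) d from rfl, piH_jD]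
    show inl (abD r d) = 1
    rw [MonoidHom.mem_ker.mp hd, _root_.map_one]
  · rintro ⟨s, hs⟩
    have hs1 : piH r s = 1 := MonoidHom.mem_ker.mp hs
    have hsplit : s = inl s.left * inr s.right := (inl_left_mul_inr_right s).symm
    have heven : ∃ m : ℤ, toAdd s.right = 2 * m := by
      have h : rightHom (piH r (inl s.left)) * rightHom (piH r (inr s.right)) = 1 := by
        rw [← _root_.map_mul, ← _root_.map_mul, ← hsplit, hs1, _root_.map_one]
      rw [piH_inl, rightHom_inl, one_mul, piH_inr, _root_.map_zpow, rightHom_uGG] at h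
      have h3 : sG ^ (toAdd s.right) = 1 := h
      have h4 : ((toAdd s.right : ℤ) : ZMod 2) = 0 := by
        have : ofAdd ((toAdd s.right : ℤ) • (1 : ZMod 2)) = 1 := by
          rw [ofAdd_zsmul]
          exact h3
        have h5 : (toAdd s.right : ℤ) • (1 : ZMod 2) = 0 := by
          have := congrArg toAdd this
          simpa using this
        rwa [zsmul_eq_mul, mul_one] at h5
      have h6 : (2 : ℤ) ∣ toAdd s.right := by
        have := (ZMod.intCast_zmod_eq_zero_iff_dvd (toAdd s.right) 2).mp h4
        simpa using this
      obtain ⟨m, hm⟩ := h6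
      exact ⟨m, hm⟩
    obtain ⟨m, hm⟩ := heven
    have hjd : jD (s.left, ofAdd m) = s := by
      rw [jD_apply, ← hm]
      exact SemidirectProduct.ext rfl rfl
    have hker : (s.left, ofAdd m) ∈ MonoidHom.ker (abD r) := by
      refine MonoidHom.mem_ker.mpr ?_
      have : inl (abD r (s.left, ofAdd m)) = (1 : GG r) := by
        rw [← MonoidHom.comp_apply, ← piH_jD]
        show piH r (jD (s.left, ofAdd m)) = 1
        rw [hjd]
        exact hs1
      exact inl_injG r (by rw [this, _root_.map_one])
    exact ⟨⟨(s.left, ofAdd m), hker⟩, hjd⟩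

end Aux5

section Aux6
open Multiplicative SemidirectProduct

def castZ (r : ℕ) : Multiplicative ℤ →* Multiplicative (ZMod r) :=
  AddMonoidHom.toMultiplicative (Int.castAddHom (ZMod r))

lemma castZ_apply (r : ℕ) (n : ℤ) : castZ r (ofAdd n) = ofAdd ((n : ZMod r)) := rfl

lemma castZ_eq_one (r : ℕ) (n : ℤ) : castZ r (ofAdd n) = 1 ↔ (r : ℤ) ∣ n := by
  rw [castZ_apply]
  constructor
  · intro h
    have h' : ((n : ZMod r)) = 0 := by
      have := congrArg toAdd h
      simpa using this
    exact (ZMod.intCast_zmod_eq_zero_iff_dvd n r).1 h'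
  · intro h
    have h' : ((n : ZMod r)) = 0 := (ZMod.intCast_zmod_eq_zero_iff_dvd n r).2 h
    rw [h']
    rfl

def dZ : F2 →* Multiplicative ℤ :=
  FreeGroup.lift (fun b => if b then ofAdd (-1 : ℤ) else ofAdd (1 : ℤ))

lemma dZ_eq (w : F2) : dZ w = ofAdd (A1 w - A2 w) := by
  have hhom : dZ = (AddMonoidHom.toMultiplicative
      ((AddMonoidHom.fst ℤ ℤ) - (AddMonoidHom.snd ℤ ℤ))).comp AZ := by
    apply FreeGroup.ext_hom
    intro b
    cases b
    · show dZ (FreeGroup.of false) = (AddMonoidHom.toMultiplicative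
        ((AddMonoidHom.fst ℤ ℤ) - (AddMonoidHom.snd ℤ ℤ))) (AZ (FreeGroup.of false))
      rw [show dZ (FreeGroup.of false) = ofAdd (1:ℤ) from by simp [dZ],
        show AZ (FreeGroup.of false) = ofAdd ((1:ℤ), (0:ℤ)) from by simp [AZ]]
      show ofAdd (1:ℤ) = ofAdd ((1:ℤ) - 0)
      norm_num
    · show dZ (FreeGroup.of true) = (AddMonoidHom.toMultiplicative
        ((AddMonoidHom.fst ℤ ℤ) - (AddMonoidHom.snd ℤ ℤ))) (AZ (FreeGroup.of true))
      rw [show dZ (FreeGroup.of true) = ofAdd (-1:ℤ) from by simp [dZ],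
        show AZ (FreeGroup.of true) = ofAdd ((0:ℤ), (1:ℤ)) from by simp [AZ]]
      show ofAdd (-1:ℤ) = ofAdd ((0:ℤ) - 1)
      norm_num
  rw [hhom]
  rfl

def dM (r : ℕ) : F2 →* Multiplicative (ZMod r) := (castZ r).comp dZ

def M2 (r : ℕ) : Subgroup F2 := MonoidHom.ker (dM r)

lemma mem_M2 (r : ℕ) (w : F2) : w ∈ M2 r ↔ (r : ℤ) ∣ (A1 w - A2 w) := by
  rw [M2, MonoidHom.mem_ker]
  show castZ r (dZ w) = 1 ↔ _
  rw [dZ_eq, castZ_eq_one]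

lemma mem_ker_abD (r : ℕ) (w : F2) (m : ℤ) :
    ((w, ofAdd m) : Dgrp) ∈ MonoidHom.ker (abD r)
      ↔ ((r : ℤ) ∣ (A1 w + m) ∧ (r : ℤ) ∣ (A2 w + m)) := by
  rw [MonoidHom.mem_ker]
  show castP r (abDZ (w, ofAdd m)) = 1 ↔ _
  rw [abDZ_apply, castP_apply]
  constructor
  · intro h
    have h' := congrArg toAdd h
    have h1 : ((A1 w + m : ℤ) : ZMod r) = 0 := congrArg Prod.fst h'
    have h2 : ((A2 w + m : ℤ) : ZMod r) = 0 := congrArg Prod.snd h'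
    exact ⟨(ZMod.intCast_zmod_eq_zero_iff_dvd _ _).1 h1,
      (ZMod.intCast_zmod_eq_zero_iff_dvd _ _).1 h2⟩
  · rintro ⟨h1, h2⟩
    have e1' : ((A1 w + m : ℤ) : ZMod r) = 0 := (ZMod.intCast_zmod_eq_zero_iff_dvd _ _).2 h1
    have e2' : ((A2 w + m : ℤ) : ZMod r) = 0 := (ZMod.intCast_zmod_eq_zero_iff_dvd _ _).2 h2
    rw [e1', e2']
    rfl

lemma mem_ker_abD' (r : ℕ) (d : Dgrp) (hd : d ∈ MonoidHom.ker (abD r)) :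
    ((r : ℤ) ∣ (A1 d.1 + toAdd d.2) ∧ (r : ℤ) ∣ (A2 d.1 + toAdd d.2)) :=
  (mem_ker_abD r d.1 (toAdd d.2)).1 hd

def thetaL (r : ℕ) [NeZero r] : ↥(MonoidHom.ker (abD r)) →* Multiplicative ℤ × ↥(M2 r) :=
  MonoidHom.mk' (fun d =>
    (ofAdd ((A1 d.1.1 + toAdd d.1.2) / (r : ℤ)),
     ⟨d.1.1, by
        obtain ⟨h1, h2⟩ := mem_ker_abD' r d.1 d.2
        rw [mem_M2]
        have : A1 d.1.1 - A2 d.1.1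
            = (A1 d.1.1 + toAdd d.1.2) - (A2 d.1.1 + toAdd d.1.2) := by ring
        rw [this]
        exact dvd_sub h1 h2⟩)) (by
    rintro x y
    have hr0 : ((r : ℕ) : ℤ) ≠ 0 := by
      have := NeZero.ne r
      exact_mod_cast this
    refine Prod.ext ?_ (Subtype.ext rfl)
    show ofAdd ((A1 ((x:Dgrp).1 * (y:Dgrp).1) + (toAdd (x:Dgrp).2 + toAdd (y:Dgrp).2)) / (r:ℤ))
        = ofAdd ((A1 (x:Dgrp).1 + toAdd (x:Dgrp).2) / (r:ℤ))
          * ofAdd ((A1 (y:Dgrp).1 + toAdd (y:Dgrp).2) / (r:ℤ))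
    obtain ⟨k1, hk1⟩ := (mem_ker_abD' r x.1 x.2).1
    obtain ⟨k2, hk2⟩ := (mem_ker_abD' r y.1 y.2).1
    have hsum : A1 (x.1.1 * y.1.1) + (toAdd x.1.2 + toAdd y.1.2)
        = (A1 x.1.1 + toAdd x.1.2) + (A1 y.1.1 + toAdd y.1.2) := by
      rw [A1_mul]; ring
    rw [hsum, hk1, hk2, Int.mul_ediv_cancel_left _ hr0, Int.mul_ediv_cancel_left _ hr0,
      ← mul_add, Int.mul_ediv_cancel_left _ hr0]
    rfl)

def iotaL (r : ℕ) : Multiplicative ℤ × ↥(M2 r) →* ↥(MonoidHom.ker (abD r)) :=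
  MonoidHom.mk' (fun p =>
    ⟨(p.2.1, ofAdd ((r : ℤ) * toAdd p.1 - A1 p.2.1)), by
      rw [mem_ker_abD]
      constructor
      · have h : A1 p.2.1 + ((r:ℤ) * toAdd p.1 - A1 p.2.1) = (r:ℤ) * toAdd p.1 := by ring
        rw [h]
        exact Dvd.intro _ rfl
      · have h : A2 p.2.1 + ((r:ℤ) * toAdd p.1 - A1 p.2.1)
            = (r:ℤ) * toAdd p.1 - (A1 p.2.1 - A2 p.2.1) := by ring
        rw [h]
        exact dvd_sub (Dvd.intro _ rfl) ((mem_M2 _ _).1 p.2.2)⟩) (by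
    rintro x y
    refine Subtype.ext (Prod.ext rfl ?_)
    show ofAdd ((r:ℤ) * (toAdd x.1 + toAdd y.1) - A1 (x.2.1 * y.2.1)) = _
    rw [A1_mul]
    show _ = ofAdd (((r:ℤ) * toAdd x.1 - A1 x.2.1) + ((r:ℤ) * toAdd y.1 - A1 y.2.1))
    congr 1
    ring)

def equiv3 (r : ℕ) [NeZero r] :
    ↥(MonoidHom.ker (abD r)) ≃* Multiplicative ℤ × ↥(M2 r) := by
  have hr0 : ((r : ℕ) : ℤ) ≠ 0 := by
    have := NeZero.ne r
    exact_mod_cast this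
  refine MonoidHom.toMulEquiv (thetaL r) (iotaL r) ?_ ?_
  · apply MonoidHom.ext
    rintro ⟨⟨w, m⟩, hd⟩
    refine Subtype.ext (Prod.ext rfl ?_)
    show ofAdd ((r:ℤ) * ((A1 w + toAdd m) / (r:ℤ)) - A1 w) = m
    obtain ⟨h1, -⟩ := mem_ker_abD' r (w, m) hd
    rw [Int.mul_ediv_cancel' h1]
    have harith : A1 (w, m).1 + toAdd (w, m).2 - A1 w = toAdd m := by
      show A1 w + toAdd m - A1 w = toAdd m
      ring
    rw [harith]
    rfl
  · apply MonoidHom.ext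
    rintro ⟨k, w⟩
    refine Prod.ext ?_ (Subtype.ext rfl)
    show ofAdd ((A1 w.1 + ((r:ℤ) * toAdd k - A1 w.1)) / (r:ℤ)) = k
    rw [show A1 w.1 + ((r:ℤ) * toAdd k - A1 w.1) = (r:ℤ) * toAdd k by ring,
      Int.mul_ediv_cancel_left _ hr0]
    rfl

end Aux6

section Aux7
open Multiplicative SemidirectProduct

def alphaFwd : F2 →* F2 := FreeGroup.lift (fun b => if b then x0 * y0 else x0)
def alphaBwd : F2 →* F2 := FreeGroup.lift (fun b => if b then x0⁻¹ * y0 else x0)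

def alphaE : F2 ≃* F2 := by
  refine MonoidHom.toMulEquiv alphaFwd alphaBwd ?_ ?_
  · apply FreeGroup.ext_hom
    intro b
    cases b
    · show alphaBwd (alphaFwd x0) = x0
      rw [show alphaFwd x0 = x0 from by simp [alphaFwd, x0]]
      simp [alphaBwd, x0]
    · show alphaBwd (alphaFwd y0) = y0
      rw [show alphaFwd y0 = x0 * y0 from by simp [alphaFwd, y0], _root_.map_mul,
        show alphaBwd x0 = x0 from by simp [alphaBwd, x0],
        show alphaBwd y0 = x0⁻¹ * y0 from by simp [alphaBwd, y0], mul_inv_cancel_left]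
  · apply FreeGroup.ext_hom
    intro b
    cases b
    · show alphaFwd (alphaBwd x0) = x0
      rw [show alphaBwd x0 = x0 from by simp [alphaBwd, x0]]
      simp [alphaFwd, x0]
    · show alphaFwd (alphaBwd y0) = y0
      rw [show alphaBwd y0 = x0⁻¹ * y0 from by simp [alphaBwd, y0], _root_.map_mul,
        _root_.map_inv, show alphaFwd x0 = x0 from by simp [alphaFwd, x0],
        show alphaFwd y0 = x0 * y0 from by simp [alphaFwd, y0], inv_mul_cancel_left]

def A1h : F2 →* Multiplicative ℤ :=
  FreeGroup.lift (fun b => if b then (1 : Multiplicative ℤ) else ofAdd (1 : ℤ))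

def eM (r : ℕ) : F2 →* Multiplicative (ZMod r) := (castZ r).comp A1h

lemma dM_alpha (r : ℕ) : (dM r).comp alphaE.toMonoidHom = eM r := by
  apply FreeGroup.ext_hom
  intro b
  cases b
  · show dM r (alphaE x0) = eM r x0
    rw [show alphaE x0 = x0 from by
      show alphaFwd x0 = x0
      simp [alphaFwd, x0]]
    show castZ r (dZ x0) = castZ r (A1h x0)
    rw [show dZ x0 = ofAdd (1:ℤ) from by simp [dZ, x0],
      show A1h x0 = ofAdd (1:ℤ) from by simp [A1h, x0]]
  · show dM r (alphaE y0) = eM r y0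
    rw [show alphaE y0 = x0 * y0 from by
      show alphaFwd y0 = x0 * y0
      simp [alphaFwd, y0]]
    show castZ r (dZ (x0 * y0)) = castZ r (A1h y0)
    rw [show dZ (x0 * y0) = (1 : Multiplicative ℤ) from by
        rw [_root_.map_mul, show dZ x0 = ofAdd (1:ℤ) from by simp [dZ, x0],
          show dZ y0 = ofAdd (-1:ℤ) from by simp [dZ, y0], ← ofAdd_add]
        norm_num,
      show A1h y0 = (1 : Multiplicative ℤ) from by simp [A1h, y0]]

def equiv4 (r : ℕ) : ↥(MonoidHom.ker (eM r)) ≃* ↥(M2 r) :=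
  (MulEquiv.subgroupCongr (by rw [← dM_alpha r])).trans (kerCompEquiv alphaE (dM r))

end Aux7

section Aux8
open Multiplicative SemidirectProduct

def shAut (n : ℤ) : MulAut (FreeGroup ℤ) := FreeGroup.freeGroupCongr (Equiv.addRight n)

lemma shAut_of (n j : ℤ) : shAut n (FreeGroup.of j) = FreeGroup.of (j + n) := by
  simp [shAut]

lemma shAut_add (a b : ℤ) : shAut (a + b) = shAut a * shAut b := by
  show _ = (FreeGroup.freeGroupCongr (Equiv.addRight b)).trans
    (FreeGroup.freeGroupCongr (Equiv.addRight a))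
  rw [FreeGroup.freeGroupCongr_trans]
  show FreeGroup.freeGroupCongr (Equiv.addRight (a + b)) = _
  congr 1
  ext v
  show v + (a + b) = v + b + a
  ring

def Sh : Multiplicative ℤ →* MulAut (FreeGroup ℤ) :=
  MonoidHom.mk' (fun q => shAut (toAdd q)) (fun a b => shAut_add _ _)

abbrev Hinf := FreeGroup ℤ ⋊[Sh] Multiplicative ℤ

def f2fwd : F2 →* Hinf :=
  FreeGroup.lift (fun b => if b then inl (FreeGroup.of (0:ℤ)) else inr (ofAdd 1))

def f2base : FreeGroup ℤ →* F2 := FreeGroup.lift (fun j => x0 ^ j * y0 * x0 ^ (-j))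

lemma f2base_of (j : ℤ) : f2base (FreeGroup.of j) = x0 ^ j * y0 * x0 ^ (-j) := by
  simp [f2base]

lemma compatF2 : ∀ q : Multiplicative ℤ,
    f2base.comp ((Sh q) : MulAut (FreeGroup ℤ)).toMonoidHom
      = (MulAut.conj ((zpowersHom F2 x0) q)).toMonoidHom.comp f2base := by
  intro q
  apply FreeGroup.ext_hom
  intro j
  simp only [MonoidHom.comp_apply, MulEquiv.coe_toMonoidHom, MulAut.conj_apply,
    zpowersHom_apply]
  show f2base (shAut (toAdd q) (FreeGroup.of j)) = x0 ^ q.toAdd * f2base (FreeGroup.of j) * (x0 ^ q.toAdd)⁻¹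
  rw [shAut_of, f2base_of, f2base_of]
  group

def f2bwd : Hinf →* F2 := SemidirectProduct.lift f2base (zpowersHom _ x0) compatF2

def f2equiv : F2 ≃* Hinf := by
  refine MonoidHom.toMulEquiv f2fwd f2bwd ?_ ?_
  · apply FreeGroup.ext_hom
    intro b
    cases b
    · show f2bwd (f2fwd (FreeGroup.of false)) = FreeGroup.of false
      rw [show f2fwd (FreeGroup.of false) = inr (ofAdd 1) from by simp [f2fwd]]
      show f2bwd (inr (ofAdd 1)) = x0
      rw [show f2bwd (inr (ofAdd 1)) = x0 ^ (1:ℤ) from by simp [f2bwd], zpow_one]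
    · show f2bwd (f2fwd (FreeGroup.of true)) = FreeGroup.of true
      rw [show f2fwd (FreeGroup.of true) = inl (FreeGroup.of (0:ℤ)) from by simp [f2fwd]]
      rw [show f2bwd (inl (FreeGroup.of (0:ℤ))) = f2base (FreeGroup.of (0:ℤ)) from by
        simp [f2bwd], f2base_of]
      show x0 ^ (0:ℤ) * y0 * x0 ^ (-(0:ℤ)) = y0
      simp
  · apply SemidirectProduct.hom_ext
    · apply FreeGroup.ext_hom
      intro j
      simp only [MonoidHom.comp_apply, MonoidHom.id_apply]
      rw [show f2bwd (inl (FreeGroup.of j)) = f2base (FreeGroup.of j) from by simp [f2bwd],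
        f2base_of, _root_.map_mul, _root_.map_mul, _root_.map_zpow, _root_.map_zpow]
      rw [show f2fwd x0 = inr (ofAdd 1) from by simp [f2fwd, x0],
        show f2fwd y0 = inl (FreeGroup.of (0:ℤ)) from by simp [f2fwd, y0]]
      have hinr : (inr (ofAdd (1:ℤ)) : Hinf) ^ j = inr (ofAdd j) := by
        rw [← _root_.map_zpow]
        congr 1
        rw [← ofAdd_zsmul]
        congr 1
        simp
      have hinr' : (inr (ofAdd (1:ℤ)) : Hinf) ^ (-j) = (inr (ofAdd j))⁻¹ := by
        rw [zpow_neg, hinr]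
      rw [hinr, hinr']
      have haut : (inl (Sh (ofAdd j) (FreeGroup.of (0:ℤ))) : Hinf)
          = inr (ofAdd j) * inl (FreeGroup.of (0:ℤ)) * inr (ofAdd j)⁻¹ :=
        SemidirectProduct.inl_aut _ _
      rw [show Sh (ofAdd j) (FreeGroup.of (0:ℤ)) = FreeGroup.of j from by
        show shAut j (FreeGroup.of (0:ℤ)) = _
        rw [shAut_of, zero_add]] at haut
      rw [_root_.map_inv] at haut
      exact haut.symm
    · apply MonoidHom.ext_mint
      simp only [MonoidHom.comp_apply, MonoidHom.id_apply]
      rw [show f2bwd (inr (ofAdd 1)) = x0 ^ (1:ℤ) from by simp [f2bwd], zpow_one]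
      rw [show f2fwd x0 = inr (ofAdd 1) from by simp [f2fwd, x0]]

def einf (r : ℕ) : Hinf →* Multiplicative (ZMod r) := (castZ r).comp rightHom

lemma eM_eq (r : ℕ) : eM r = (einf r).comp f2equiv.toMonoidHom := by
  apply FreeGroup.ext_hom
  intro b
  cases b
  · show eM r (FreeGroup.of false) = einf r (f2fwd (FreeGroup.of false))
    rw [show f2fwd (FreeGroup.of false) = inr (ofAdd 1) from by simp [f2fwd]]
    show castZ r (A1h (FreeGroup.of false)) = castZ r (rightHom (inr (ofAdd 1)))
    rw [show A1h (FreeGroup.of false) = ofAdd (1:ℤ) from by simp [A1h], rightHom_inr]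
  · show eM r (FreeGroup.of true) = einf r (f2fwd (FreeGroup.of true))
    rw [show f2fwd (FreeGroup.of true) = inl (FreeGroup.of (0:ℤ)) from by simp [f2fwd]]
    show castZ r (A1h (FreeGroup.of true)) = castZ r (rightHom (inl (FreeGroup.of (0:ℤ))))
    rw [show A1h (FreeGroup.of true) = (1 : Multiplicative ℤ) from by simp [A1h], rightHom_inl]

def equiv5 (r : ℕ) : ↥(MonoidHom.ker (eM r)) ≃* ↥(MonoidHom.ker (einf r)) :=
  (MulEquiv.subgroupCongr (by rw [eM_eq r])).trans (kerCompEquiv f2equiv (einf r))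

end Aux8

section Aux9
open Multiplicative SemidirectProduct

def Shr (r : ℕ) : Multiplicative ℤ →* MulAut (FreeGroup ℤ) :=
  MonoidHom.mk' (fun q => shAut (toAdd q * r)) (fun a b => by
    show shAut ((toAdd a + toAdd b) * r) = _
    rw [add_mul, shAut_add])

abbrev Hr (r : ℕ) := FreeGroup ℤ ⋊[Shr r] Multiplicative ℤ

def jr (r : ℕ) : Hr r →* Hinf :=
  MonoidHom.mk' (fun p => ⟨p.left, ofAdd (toAdd p.right * r)⟩) (by
    rintro ⟨w, q⟩ ⟨w', q'⟩
    refine SemidirectProduct.ext ?_ ?_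
    · show w * Shr r q w' = w * Sh (ofAdd (toAdd q * r)) w'
      rfl
    · show ofAdd ((toAdd q + toAdd q') * r) = ofAdd (toAdd q * r) * ofAdd (toAdd q' * r)
      rw [← ofAdd_add, add_mul])

lemma jr_apply (r : ℕ) (w : FreeGroup ℤ) (q : ℤ) :
    jr r ⟨w, ofAdd q⟩ = ⟨w, ofAdd (q * r)⟩ := rfl

noncomputable def equiv6 (r : ℕ) [NeZero r] : Hr r ≃* ↥(MonoidHom.ker (einf r)) := by
  have hr0 : ((r : ℕ) : ℤ) ≠ 0 := by
    have := NeZero.ne r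
    exact_mod_cast this
  refine restrictEquiv (jr r) (MonoidHom.ker (einf r)) ?_ ?_ ?_
  · rintro ⟨w, q⟩ ⟨w', q'⟩ h
    have h1 : w = w' := congrArg SemidirectProduct.left h
    have h2 : toAdd q * (r:ℤ) = toAdd q' * r :=
      congrArg (fun x => toAdd (SemidirectProduct.right x)) h
    have h3 : q = q' := by
      have : toAdd q = toAdd q' := by
        exact mul_right_cancel₀ hr0 h2
      exact toAdd.injective this
    rw [h1, h3]
  · rintro ⟨w, q⟩
    refine MonoidHom.mem_ker.mpr ?_
    show castZ r (rightHom (⟨w, ofAdd (toAdd q * r)⟩ : Hinf)) = 1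
    rw [show rightHom (⟨w, ofAdd (toAdd q * r)⟩ : Hinf) = ofAdd (toAdd q * r) from rfl,
      castZ_eq_one]
    exact ⟨toAdd q, mul_comm _ _⟩
  · rintro ⟨s, hs⟩
    have hs1 : castZ r (ofAdd (toAdd s.right)) = 1 := by
      have := MonoidHom.mem_ker.mp hs
      exact this
    rw [castZ_eq_one] at hs1
    obtain ⟨q, hq⟩ := hs1
    refine ⟨⟨s.left, ofAdd q⟩, ?_⟩
    show jr r ⟨s.left, ofAdd q⟩ = s
    rw [jr_apply]
    refine SemidirectProduct.ext rfl ?_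
    show ofAdd (q * r) = s.right
    rw [show s.right = ofAdd (toAdd s.right) from rfl, hq]
    rw [mul_comm]

def TT (r : ℕ) : FreeGroup (Fin (r+1)) := FreeGroup.of 0

def idx (r : ℕ) [NeZero r] (j : ℤ) : Fin (r+1) :=
  ⟨(j % (r:ℤ)).toNat + 1, by
    have hr0 : 0 < (r:ℤ) := by
      have := Nat.pos_of_ne_zero (NeZero.ne r)
      exact_mod_cast this
    have h1 : 0 ≤ j % (r:ℤ) := Int.emod_nonneg j (ne_of_gt hr0)
    have h2 : j % (r:ℤ) < r := Int.emod_lt_of_pos j hr0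
    omega⟩

def grFwdBase (r : ℕ) [NeZero r] : FreeGroup ℤ →* FreeGroup (Fin (r+1)) :=
  FreeGroup.lift (fun j => TT r ^ (j / (r:ℤ)) * FreeGroup.of (idx r j) * TT r ^ (-(j / (r:ℤ))))

lemma grFwdBase_of (r : ℕ) [NeZero r] (j : ℤ) :
    grFwdBase r (FreeGroup.of j)
      = TT r ^ (j / (r:ℤ)) * FreeGroup.of (idx r j) * TT r ^ (-(j / (r:ℤ))) := by
  simp [grFwdBase]

lemma compatGr (r : ℕ) [NeZero r] : ∀ q : Multiplicative ℤ,
    (grFwdBase r).comp ((Shr r q) : MulAut (FreeGroup ℤ)).toMonoidHom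
      = (MulAut.conj ((zpowersHom (FreeGroup (Fin (r+1))) (TT r)) q)).toMonoidHom.comp
          (grFwdBase r) := by
  intro q
  have hr0 : ((r : ℕ) : ℤ) ≠ 0 := by
    have := NeZero.ne r
    exact_mod_cast this
  apply FreeGroup.ext_hom
  intro j
  simp only [MonoidHom.comp_apply, MulEquiv.coe_toMonoidHom, MulAut.conj_apply,
    zpowersHom_apply]
  show grFwdBase r (shAut (toAdd q * r) (FreeGroup.of j))
      = TT r ^ q.toAdd * grFwdBase r (FreeGroup.of j) * (TT r ^ q.toAdd)⁻¹
  rw [shAut_of, grFwdBase_of, grFwdBase_of]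
  have hdiv : (j + toAdd q * r) / (r:ℤ) = j / r + toAdd q := by
    rw [Int.add_mul_ediv_right _ _ hr0]
  have hmod : idx r (j + toAdd q * r) = idx r j := by
    have : (j + toAdd q * (r:ℤ)) % r = j % r := Int.add_mul_emod_self_right ..
    simp only [idx, this]
  rw [hdiv, hmod]
  group

def grFwd (r : ℕ) [NeZero r] : Hr r →* FreeGroup (Fin (r+1)) :=
  SemidirectProduct.lift (grFwdBase r) (zpowersHom _ (TT r)) (compatGr r)

def grBwd (r : ℕ) : FreeGroup (Fin (r+1)) →* Hr r :=
  FreeGroup.lift (fun i =>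
    if i = 0 then inr (ofAdd 1) else inl (FreeGroup.of (((i.val - 1 : ℕ) : ℤ))))

def equiv7 (r : ℕ) [NeZero r] : Hr r ≃* FreeGroup (Fin (r+1)) := by
  have hr0 : (0:ℤ) < (r:ℤ) := by
    have := Nat.pos_of_ne_zero (NeZero.ne r)
    exact_mod_cast this
  refine MonoidHom.toMulEquiv (grFwd r) (grBwd r) ?_ ?_
  · apply SemidirectProduct.hom_ext
    · apply FreeGroup.ext_hom
      intro j
      simp only [MonoidHom.comp_apply, MonoidHom.id_apply]
      rw [show grFwd r (inl (FreeGroup.of j)) = grFwdBase r (FreeGroup.of j) from by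
        simp [grFwd], grFwdBase_of, _root_.map_mul, _root_.map_mul, _root_.map_zpow,
        _root_.map_zpow]
      rw [show grBwd r (TT r) = inr (ofAdd 1) from by simp [grBwd, TT]]
      rw [show grBwd r (FreeGroup.of (idx r j)) = inl (FreeGroup.of ((j % (r:ℤ)))) from by
        rw [show grBwd r (FreeGroup.of (idx r j))
            = inl (FreeGroup.of ((((idx r j).val - 1 : ℕ) : ℤ))) from by
          have hne : idx r j ≠ 0 := by
            intro hcontra
            have hv : (idx r j).val = 0 := by rw [hcontra]; rfl
            simp only [idx] at hv
            omega
          simp [grBwd, hne]]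
        congr 2
        show ((((j % (r:ℤ)).toNat + 1) - 1 : ℕ) : ℤ) = j % (r:ℤ)
        have h1 : 0 ≤ j % (r:ℤ) := Int.emod_nonneg j (ne_of_gt hr0)
        omega]
      have hinr : (inr (ofAdd (1:ℤ)) : Hr r) ^ (j / (r:ℤ)) = inr (ofAdd (j / (r:ℤ))) := by
        rw [← _root_.map_zpow]
        congr 1
        rw [← ofAdd_zsmul]
        congr 1
        simp
      have hinr' : (inr (ofAdd (1:ℤ)) : Hr r) ^ (-(j / (r:ℤ)))
          = (inr (ofAdd (j / (r:ℤ))))⁻¹ := by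
        rw [zpow_neg, hinr]
      rw [hinr, hinr']
      have haut : (inl (Shr r (ofAdd (j / (r:ℤ))) (FreeGroup.of (j % (r:ℤ)))) : Hr r)
          = inr (ofAdd (j / (r:ℤ))) * inl (FreeGroup.of (j % (r:ℤ)))
            * inr (ofAdd (j / (r:ℤ)))⁻¹ :=
        SemidirectProduct.inl_aut _ _
      rw [show Shr r (ofAdd (j / (r:ℤ))) (FreeGroup.of (j % (r:ℤ))) = FreeGroup.of j from by
        show shAut (j / (r:ℤ) * r) (FreeGroup.of (j % (r:ℤ))) = _
        rw [shAut_of]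
        congr 1
        exact Int.emod_add_ediv_mul j r] at haut
      rw [_root_.map_inv] at haut
      exact haut.symm
    · apply MonoidHom.ext_mint
      simp only [MonoidHom.comp_apply, MonoidHom.id_apply]
      rw [show grFwd r (inr (ofAdd 1)) = TT r ^ (1:ℤ) from by simp [grFwd], zpow_one,
        show grBwd r (TT r) = inr (ofAdd 1) from by simp [grBwd, TT]]
  · apply FreeGroup.ext_hom
    intro i
    simp only [MonoidHom.comp_apply, MonoidHom.id_apply]
    by_cases hi : i = 0
    · subst hi
      rw [show grBwd r (FreeGroup.of 0) = inr (ofAdd 1) from by simp [grBwd]]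
      rw [show grFwd r (inr (ofAdd 1)) = TT r ^ (1:ℤ) from by simp [grFwd], zpow_one]
      rfl
    · rw [show grBwd r (FreeGroup.of i) = inl (FreeGroup.of (((i.val - 1 : ℕ) : ℤ))) from by
        simp [grBwd, hi]]
      rw [show grFwd r (inl (FreeGroup.of (((i.val - 1 : ℕ) : ℤ))))
          = grFwdBase r (FreeGroup.of (((i.val - 1 : ℕ) : ℤ))) from by simp [grFwd],
        grFwdBase_of]
      have hival : 1 ≤ i.val ∧ i.val ≤ r := by
        have h1 : i.val < r + 1 := i.isLt
        have h2 : i.val ≠ 0 := fun h => hi (Fin.ext (by simp [h]))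
        omega
      have h0m : (0:ℤ) ≤ ((i.val - 1 : ℕ) : ℤ) := Int.natCast_nonneg _
      have hmr : ((i.val - 1 : ℕ) : ℤ) < (r:ℤ) := by
        have : (i.val - 1 : ℕ) < r := by omega
        exact_mod_cast this
      have hdiv0 : ((i.val - 1 : ℕ) : ℤ) / (r:ℤ) = 0 := Int.ediv_eq_zero_of_lt h0m hmr
      have hmod : ((i.val - 1 : ℕ) : ℤ) % (r:ℤ) = ((i.val - 1 : ℕ) : ℤ) :=
        Int.emod_eq_of_lt h0m hmr
      have hidx : idx r ((i.val - 1 : ℕ) : ℤ) = i := by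
        apply Fin.ext
        show ((((i.val - 1 : ℕ) : ℤ)) % (r:ℤ)).toNat + 1 = i.val
        rw [hmod]
        omega
      rw [hdiv0, hidx]
      simp

end Aux9

section Part1Final
open Multiplicative

/-- Part 1: `P(r,2) ≅ ℤ × F_{r+1}`. -/
noncomputable def part1Equiv (r : ℕ) [NeZero r] :
    ↥(Pm r 2) ≃* Multiplicative ℤ × FreeGroup (Fin (r+1)) :=
  (equiv1 r).trans ((equiv2 r).symm.trans ((equiv3 r).trans
    (MulEquiv.prodCongr (MulEquiv.refl _)
      (((equiv4 r).symm.trans (equiv5 r)).trans ((equiv6 r).symm.trans (equiv7 r))))))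

end Part1Final

section Center
open Multiplicative SemidirectProduct

def retr (N : ℕ) : FreeGroup ℤ →* FreeGroup ℤ :=
  FreeGroup.lift (fun j => if j.natAbs ≤ N then FreeGroup.of j else 1)

lemma retr_of (N : ℕ) (j : ℤ) :
    retr N (FreeGroup.of j) = if j.natAbs ≤ N then FreeGroup.of j else 1 := by
  simp [retr]

lemma retr_bound (v : FreeGroup ℤ) : ∃ N : ℕ, ∀ M : ℕ, N ≤ M → retr M v = v := by
  induction v using FreeGroup.induction_on with
  | C1 => exact ⟨0, fun M _ => _root_.map_one _⟩
  | of j =>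
      refine ⟨j.natAbs, fun M hM => ?_⟩
      show retr M (FreeGroup.of j) = FreeGroup.of j
      rw [retr_of, if_pos hM]
  | inv_of j hj =>
      obtain ⟨N, hN⟩ := hj
      exact ⟨N, fun M hM => by rw [_root_.map_inv, hN M hM]⟩
  | mul x y hx hy =>
      obtain ⟨Nx, hNx⟩ := hx
      obtain ⟨Ny, hNy⟩ := hy
      refine ⟨max Nx Ny, fun M hM => ?_⟩
      rw [_root_.map_mul, hNx M (le_trans (le_max_left _ _) hM),
        hNy M (le_trans (le_max_right _ _) hM)]

lemma shAut_zero : shAut 0 = 1 := by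
  show FreeGroup.freeGroupCongr (Equiv.addRight (0:ℤ)) = 1
  rw [show Equiv.addRight (0:ℤ) = Equiv.refl ℤ from by
    ext v
    show v + 0 = v
    ring]
  rw [FreeGroup.freeGroupCongr_refl]
  rfl

lemma shift_inv_trivial (k : ℤ) (hk : 1 ≤ k) (v : FreeGroup ℤ) (hv : shAut k v = v) :
    v = 1 := by
  obtain ⟨N, hN⟩ := retr_bound v
  have hpow : ∀ n : ℕ, shAut ((n : ℤ) * k) v = v := by
    intro n
    induction n with
    | zero => rw [show ((0:ℕ):ℤ) * k = 0 by ring, shAut_zero]; rfl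
    | succ n ih =>
        have : ((n+1 : ℕ) : ℤ) * k = (n:ℤ) * k + k := by push_cast; ring
        rw [this, shAut_add]
        show shAut ((n:ℤ)*k) (shAut k v) = v
        rw [hv, ih]
  set m : ℤ := ((2*N+1 : ℕ) : ℤ) * k with hm
  have hvm : shAut m v = v := hpow (2*N+1)
  have hmN : (2*(N:ℤ)+1) ≤ m := by
    rw [hm]
    have h1 : ((2*N+1 : ℕ) : ℤ) * 1 ≤ ((2*N+1 : ℕ) : ℤ) * k := by
      apply mul_le_mul_of_nonneg_left hk
      positivity
    push_cast at h1 ⊢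
    omega
  have hvN : retr N v = v := hN N le_rfl
  have hF : (retr N).comp (((shAut m) : MulAut (FreeGroup ℤ)).toMonoidHom.comp (retr N))
      = 1 := by
    apply FreeGroup.ext_hom
    intro j
    simp only [MonoidHom.comp_apply, MulEquiv.coe_toMonoidHom, MonoidHom.one_apply]
    rw [retr_of]
    by_cases hj : j.natAbs ≤ N
    · rw [if_pos hj, shAut_of, retr_of, if_neg (by omega)]
    · rw [if_neg hj, _root_.map_one, _root_.map_one]
  have hFv : ((retr N).comp (((shAut m) : MulAut (FreeGroup ℤ)).toMonoidHom.comp (retr N))) v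
      = v := by
    simp only [MonoidHom.comp_apply, MulEquiv.coe_toMonoidHom]
    rw [hvN, hvm, hvN]
  rw [hF] at hFv
  exact hFv.symm

lemma centerHr (r : ℕ) [NeZero r] (z : Hr r) (hz : ∀ g, z * g = g * z) : z = 1 := by
  have hr1 : (1:ℤ) ≤ (r:ℤ) := by
    have := Nat.pos_of_ne_zero (NeZero.ne r)
    exact_mod_cast this
  have h1 := hz ⟨1, ofAdd 1⟩
  have hleft : z.left * Shr r z.right 1 = 1 * Shr r (ofAdd 1) z.left :=
    congrArg SemidirectProduct.left h1
  rw [_root_.map_one, mul_one, one_mul] at hleft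
  have hzleft : z.left = 1 := by
    refine shift_inv_trivial ((r:ℤ)) hr1 z.left ?_
    have : Shr r (ofAdd 1) z.left = shAut ((1:ℤ) * r) z.left := rfl
    rw [this, one_mul] at hleft
    exact hleft.symm
  have h2 := hz ⟨FreeGroup.of 0, 1⟩
  have hleft2 : z.left * Shr r z.right (FreeGroup.of 0)
      = FreeGroup.of 0 * Shr r 1 z.left := congrArg SemidirectProduct.left h2
  rw [hzleft, one_mul, _root_.map_one] at hleft2
  have hleft2' : shAut (toAdd z.right * r) (FreeGroup.of 0)
      = FreeGroup.of 0 * z.left := by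
    rw [hzleft, mul_one]
    exact hleft2
  rw [hzleft, mul_one, shAut_of, zero_add] at hleft2'
  have hq0 : toAdd z.right * (r:ℤ) = 0 := by
    have h0 : (0:ℤ) = 0 + 0 := by ring
    have := FreeGroup.of_injective hleft2'
    exact this
  have hrne : ((r:ℕ):ℤ) ≠ 0 := by omega
  have hq : toAdd z.right = 0 := by
    rcases mul_eq_zero.1 hq0 with h | h
    · exact h
    · exact absurd h hrne
  have : z = ⟨z.left, z.right⟩ := rfl
  rw [this, hzleft]
  have : z.right = 1 := toAdd.injective hq
  rw [this]
  rfl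

lemma centerF (r : ℕ) [NeZero r] (z : FreeGroup (Fin (r+1)))
    (hz : ∀ g, z * g = g * z) : z = 1 := by
  have hc : ∀ g : Hr r, (equiv7 r).symm z * g = g * (equiv7 r).symm z := by
    intro g
    have := hz ((equiv7 r) g)
    have h2 := congrArg (equiv7 r).symm this
    rw [_root_.map_mul, _root_.map_mul, MulEquiv.symm_apply_apply] at h2
    exact h2
  have h1 : (equiv7 r).symm z = 1 := centerHr r _ hc
  have := congrArg (equiv7 r) h1
  rwa [MulEquiv.apply_symm_apply, _root_.map_one] at this

end Center

section Part2
open Multiplicative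

abbrev FF (r : ℕ) := FreeGroup (Fin (r+1))
abbrev GP (r : ℕ) := Multiplicative ℤ × FF r
abbrev Lam (r : ℕ) := Multiplicative (Fin (r+1) → ℤ)

def lamHat (r : ℕ) (l : Fin (r+1) → ℤ) : FF r →* Multiplicative ℤ :=
  FreeGroup.lift (fun i => ofAdd (l i))

lemma lamHat_of (r : ℕ) (l : Fin (r+1) → ℤ) (i : Fin (r+1)) :
    lamHat r l (FreeGroup.of i) = ofAdd (l i) := by simp [lamHat]

lemma lamHat_add (r : ℕ) (l l' : Fin (r+1) → ℤ) (f : FF r) :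
    lamHat r (l + l') f = lamHat r l f * lamHat r l' f := by
  have h : lamHat r (l + l') = (lamHat r l) * (lamHat r l') := by
    apply FreeGroup.ext_hom
    intro i
    rw [lamHat_of]
    show ofAdd (l i + l' i) = lamHat r l (FreeGroup.of i) * lamHat r l' (FreeGroup.of i)
    rw [lamHat_of, lamHat_of, ofAdd_add]
  rw [h]
  rfl

lemma lamHat_neg (r : ℕ) (l : Fin (r+1) → ℤ) (f : FF r) :
    lamHat r (-l) f = (lamHat r l f)⁻¹ := by
  have h : lamHat r (-l) = (lamHat r l)⁻¹ := by
    apply FreeGroup.ext_hom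
    intro i
    rw [lamHat_of]
    show ofAdd (-(l i)) = (lamHat r l (FreeGroup.of i))⁻¹
    rw [lamHat_of]
    rfl
  rw [h]
  rfl

def thN1 (r : ℕ) (l : Fin (r+1) → ℤ) : GP r ≃* GP r where
  toFun p := (p.1 * lamHat r l p.2, p.2)
  invFun p := (p.1 * (lamHat r l p.2)⁻¹, p.2)
  left_inv p := by
    refine Prod.ext ?_ rfl
    show p.1 * lamHat r l p.2 * (lamHat r l p.2)⁻¹ = p.1
    rw [mul_inv_cancel_right]
  right_inv p := by
    refine Prod.ext ?_ rfl
    show p.1 * (lamHat r l p.2)⁻¹ * lamHat r l p.2 = p.1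
    rw [inv_mul_cancel_right]
  map_mul' p q := by
    refine Prod.ext ?_ rfl
    show (p.1 * q.1) * lamHat r l (p.2 * q.2) = (p.1 * lamHat r l p.2) * (q.1 * lamHat r l q.2)
    rw [_root_.map_mul]
    exact mul_mul_mul_comm _ _ _ _

def thN (r : ℕ) : Lam r →* MulAut (GP r) :=
  MonoidHom.mk' (fun lm => thN1 r (toAdd lm)) (by
    intro a b
    apply MulEquiv.ext
    rintro ⟨k, f⟩
    refine Prod.ext ?_ rfl
    show k * lamHat r (toAdd a + toAdd b) f
        = (k * lamHat r (toAdd b) f) * lamHat r (toAdd a) f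
    rw [lamHat_add, mul_comm (lamHat r (toAdd a) f) (lamHat r (toAdd b) f), ← mul_assoc])

def invA : MulAut (Multiplicative ℤ) :=
  { toFun := fun k => k⁻¹
    invFun := fun k => k⁻¹
    left_inv := fun k => inv_inv k
    right_inv := fun k => inv_inv k
    map_mul' := fun a b => mul_inv a b }

lemma invA_sq : invA ^ 2 = 1 := by
  rw [sq]
  apply MulEquiv.ext
  intro k
  show (k⁻¹)⁻¹ = k
  rw [inv_inv]

def epsA : Multiplicative (ZMod 2) →* MulAut (Multiplicative ℤ) := zmodHom 2 invA invA_sq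

def invL (r : ℕ) : MulAut (Lam r) :=
  { toFun := fun k => k⁻¹
    invFun := fun k => k⁻¹
    left_inv := fun k => inv_inv k
    right_inv := fun k => inv_inv k
    map_mul' := fun a b => mul_inv a b }

lemma invL_sq (r : ℕ) : invL r ^ 2 = 1 := by
  rw [sq]
  apply MulEquiv.ext
  intro k
  show (k⁻¹)⁻¹ = k
  rw [inv_inv]

def epsL (r : ℕ) : Multiplicative (ZMod 2) →* MulAut (Lam r) := zmodHom 2 (invL r) (invL_sq r)

def actFun (r : ℕ) (α : MulAut (FF r)) (lm : Lam r) : Lam r :=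
  ofAdd (fun i => toAdd ((lamHat r (toAdd lm)) (α.symm (FreeGroup.of i))))

lemma lamHat_actFun (r : ℕ) (α : MulAut (FF r)) (lm : Lam r) (f : FF r) :
    lamHat r (toAdd (actFun r α lm)) f = lamHat r (toAdd lm) (α.symm f) := by
  have h : lamHat r (toAdd (actFun r α lm))
      = (lamHat r (toAdd lm)).comp (α.symm : FF r ≃* FF r).toMonoidHom := by
    apply FreeGroup.ext_hom
    intro i
    rw [lamHat_of]
    rfl
  rw [h]
  rfl

lemma actFun_one (r : ℕ) (lm : Lam r) : actFun r 1 lm = lm := by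
  show ofAdd (fun i => toAdd ((lamHat r (toAdd lm)) ((1 : MulAut (FF r)).symm (FreeGroup.of i)))) = lm
  have h : ∀ i : Fin (r+1),
      toAdd ((lamHat r (toAdd lm)) ((1 : MulAut (FF r)).symm (FreeGroup.of i))) = toAdd lm i := by
    intro i
    rw [show (1 : MulAut (FF r)).symm (FreeGroup.of i) = FreeGroup.of i from rfl, lamHat_of]
    rfl
  rw [show (fun i => toAdd ((lamHat r (toAdd lm)) ((1 : MulAut (FF r)).symm (FreeGroup.of i))))
      = fun i => toAdd lm i from funext h]
  rfl

lemma actFun_mul_alpha (r : ℕ) (α β : MulAut (FF r)) (lm : Lam r) :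
    actFun r (α * β) lm = actFun r α (actFun r β lm) := by
  show ofAdd _ = ofAdd _
  congr 1
  funext i
  rw [show (lamHat r (toAdd (actFun r β lm))) ((α : MulAut (FF r)).symm (FreeGroup.of i))
      = (lamHat r (toAdd lm)) (β.symm (α.symm (FreeGroup.of i))) from
    lamHat_actFun r β lm _]
  rfl

lemma actFun_map_mul (r : ℕ) (α : MulAut (FF r)) (lm lm' : Lam r) :
    actFun r α (lm * lm') = actFun r α lm * actFun r α lm' := by
  show ofAdd _ = ofAdd _ * ofAdd _
  rw [← ofAdd_add]
  congr 1
  funext i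
  show toAdd ((lamHat r (toAdd (lm * lm'))) (α.symm (FreeGroup.of i))) = _
  rw [show toAdd (lm * lm') = toAdd lm + toAdd lm' from rfl, lamHat_add]
  rfl

def actE (r : ℕ) (α : MulAut (FF r)) : MulAut (Lam r) where
  toFun := actFun r α
  invFun := actFun r α⁻¹
  left_inv lm := by rw [← actFun_mul_alpha, inv_mul_cancel, actFun_one]
  right_inv lm := by rw [← actFun_mul_alpha, mul_inv_cancel, actFun_one]
  map_mul' := actFun_map_mul r α

def phiF (r : ℕ) : MulAut (FF r) →* MulAut (Lam r) :=
  MonoidHom.mk' (actE r) (by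
    intro a b
    apply MulEquiv.ext
    intro lm
    exact actFun_mul_alpha r a b lm)

def phiAct (r : ℕ) : (Multiplicative (ZMod 2) × MulAut (FF r)) →* MulAut (Lam r) :=
  MonoidHom.noncommCoprod (epsL r) (phiF r) (by
    intro x α
    have hbase : Commute (invL r) (actE r α) := by
      show invL r * actE r α = actE r α * invL r
      apply MulEquiv.ext
      intro lm
      show (actE r α lm)⁻¹ = actE r α (lm⁻¹)
      rw [_root_.map_inv]
    rw [show epsL r x = invL r ^ ((ZMod.cast (toAdd x)) : ℤ) from zmodHom_apply' 2 _ _ x]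
    exact Commute.zpow_left hbase _)

def embA (r : ℕ) : MulAut (Multiplicative ℤ) →* MulAut (GP r) :=
  MonoidHom.mk' (fun e => MulEquiv.prodCongr e (MulEquiv.refl _)) (by
    intro a b
    apply MulEquiv.ext
    rintro ⟨k, f⟩
    rfl)

def embF (r : ℕ) : MulAut (FF r) →* MulAut (GP r) :=
  MonoidHom.mk' (fun e => MulEquiv.prodCongr (MulEquiv.refl _) e) (by
    intro a b
    apply MulEquiv.ext
    rintro ⟨k, f⟩
    rfl)

def thQ (r : ℕ) : (Multiplicative (ZMod 2) × MulAut (FF r)) →* MulAut (GP r) :=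
  MonoidHom.noncommCoprod ((embA r).comp epsA) (embF r) (by
    intro x α
    show _ = _
    apply MulEquiv.ext
    rintro ⟨k, f⟩
    rfl)

lemma thQ_apply (r : ℕ) (x : Multiplicative (ZMod 2)) (α : MulAut (FF r))
    (k : Multiplicative ℤ) (f : FF r) :
    thQ r (x, α) (k, f) = (epsA x k, α f) := rfl

lemma epsA_one : epsA 1 = 1 := _root_.map_one epsA

lemma epsA_s : epsA (ofAdd 1) = invA := zmodHom_one _ _ _

lemma epsL_one (r : ℕ) : epsL r 1 = 1 := _root_.map_one (epsL r)

lemma epsL_s (r : ℕ) : epsL r (ofAdd 1) = invL r := zmodHom_one _ _ _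

lemma zmod2_rep (x : Multiplicative (ZMod 2)) : x = 1 ∨ x = ofAdd 1 := by
  rcases zmod2_cases (toAdd x) with h | h
  · left
    have : x = ofAdd (toAdd x) := rfl
    rw [this, h]
    rfl
  · right
    have : x = ofAdd (toAdd x) := rfl
    rw [this, h]

lemma compatTh (r : ℕ) : ∀ q : Multiplicative (ZMod 2) × MulAut (FF r),
    (thN r).comp ((phiAct r q) : MulAut (Lam r)).toMonoidHom
      = (MulAut.conj (thQ r q)).toMonoidHom.comp (thN r) := by
  rintro ⟨x, α⟩
  apply MonoidHom.ext
  intro lm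
  apply MulEquiv.ext
  rintro ⟨k, f⟩
  simp only [MonoidHom.comp_apply, MulEquiv.coe_toMonoidHom, MulAut.conj_apply]
  have hphi : phiAct r (x, α) lm = epsL r x (actE r α lm) := rfl
  have hRHS : (thQ r (x, α) * thN r lm * (thQ r (x, α))⁻¹) (k, f)
      = (k * epsA x (lamHat r (toAdd lm) (α⁻¹ f)), f) := by
    have hinv : (thQ r (x, α))⁻¹ (k, f) = ((epsA x)⁻¹ k, α⁻¹ f) := rfl
    show thQ r (x, α) (thN r lm ((thQ r (x, α))⁻¹ (k, f))) = _
    rw [hinv]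
    show thQ r (x, α) ((epsA x)⁻¹ k * lamHat r (toAdd lm) (α⁻¹ f), α⁻¹ f) = _
    rw [thQ_apply]
    refine Prod.ext ?_ ?_
    · show epsA x ((epsA x)⁻¹ k * lamHat r (toAdd lm) (α⁻¹ f)) = _
      rw [_root_.map_mul]
      congr 1
      show epsA x ((epsA x)⁻¹ k) = k
      exact MulEquiv.apply_symm_apply _ k
    · show α (α⁻¹ f) = f
      exact MulEquiv.apply_symm_apply _ f
  rw [hRHS]
  show (k * lamHat r (toAdd (phiAct r (x, α) lm)) f, f) = _
  refine Prod.ext ?_ rfl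
  show k * lamHat r (toAdd (phiAct r (x, α) lm)) f = k * epsA x (lamHat r (toAdd lm) (α⁻¹ f))
  congr 1
  rw [hphi]
  rcases zmod2_rep x with hx | hx
  · subst hx
    rw [epsL_one, epsA_one]
    show lamHat r (toAdd (actE r α lm)) f = lamHat r (toAdd lm) (α⁻¹ f)
    exact lamHat_actFun r α lm f
  · subst hx
    rw [epsL_s, epsA_s]
    show lamHat r (toAdd ((actE r α lm)⁻¹)) f = (lamHat r (toAdd lm) (α⁻¹ f))⁻¹
    rw [show toAdd ((actE r α lm)⁻¹) = -(toAdd (actE r α lm)) from rfl, lamHat_neg]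
    congr 1
    exact lamHat_actFun r α lm f

def bigTheta (r : ℕ) :
    (Lam r ⋊[phiAct r] (Multiplicative (ZMod 2) × MulAut (FF r))) →* MulAut (GP r) :=
  SemidirectProduct.lift (thN r) (thQ r) (compatTh r)

lemma bigTheta_apply (r : ℕ) (lm : Lam r) (x : Multiplicative (ZMod 2)) (α : MulAut (FF r))
    (k : Multiplicative ℤ) (f : FF r) :
    bigTheta r ⟨lm, (x, α)⟩ (k, f) = (epsA x k * lamHat r (toAdd lm) (α f), α f) := by
  show (thN r lm * thQ r (x, α)) (k, f) = _
  show thN r lm (thQ r (x, α) (k, f)) = _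
  rw [thQ_apply]
  rfl

end Part2

section Part2Final
open Multiplicative

lemma homZ_val (g : Multiplicative ℤ →* Multiplicative ℤ) (n : ℤ) :
    g (ofAdd n) = ofAdd (n * toAdd (g (ofAdd 1))) := by
  have h0 : (ofAdd n : Multiplicative ℤ) = (ofAdd (1:ℤ)) ^ n := by
    rw [← ofAdd_zsmul]
    congr 1
    simp
  rw [h0, _root_.map_zpow]
  show (ofAdd (toAdd (g (ofAdd 1)))) ^ n = _
  rw [← ofAdd_zsmul]
  exact congrArg ofAdd (zsmul_eq_mul _ _)

lemma bigTheta_inj (r : ℕ) [NeZero r] : Function.Injective (bigTheta r) := by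
  refine (injective_iff_map_eq_one _).2 ?_
  rintro ⟨lm, x, α⟩ h1
  have hev : ∀ (k : Multiplicative ℤ) (f : FF r),
      (epsA x k * lamHat r (toAdd lm) (α f), α f) = ((k, f) : GP r) := by
    intro k f
    rw [← bigTheta_apply, h1]
    rfl
  have hα : α = 1 := by
    apply MulEquiv.ext
    intro f
    exact congrArg Prod.snd (hev 1 f)
  have hlam : ∀ f, lamHat r (toAdd lm) f = 1 := by
    intro f
    have h2 := congrArg Prod.fst (hev 1 f)
    rw [show α f = f from by rw [hα]; rfl] at h2
    rw [_root_.map_one, one_mul] at h2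
    exact h2
  have hlm : lm = 1 := by
    have hl : ∀ i : Fin (r+1), toAdd lm i = 0 := by
      intro i
      have h3 := hlam (FreeGroup.of i)
      rw [lamHat_of] at h3
      have h4 := congrArg toAdd h3
      simpa using h4
    have : toAdd lm = (0 : Fin (r+1) → ℤ) := funext hl
    exact toAdd.injective this
  have hx : x = 1 := by
    rcases zmod2_rep x with h | h
    · exact h
    · exfalso
      subst h
      have h2 : epsA (ofAdd 1) (ofAdd (1:ℤ)) * lamHat r (toAdd lm) (α 1) = ofAdd 1 :=
        congrArg Prod.fst (hev (ofAdd 1) 1)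
      rw [hlam (α 1), mul_one, epsA_s] at h2
      have h3 : (-1 : ℤ) = 1 := congrArg toAdd h2
      omega
  exact SemidirectProduct.ext hlm (Prod.ext hx hα)

lemma bigTheta_surj (r : ℕ) [NeZero r] : Function.Surjective (bigTheta r) := by
  intro θ
  have hcent2 : ∀ (η : MulAut (GP r)) (k : Multiplicative ℤ), (η (k, 1)).2 = 1 := by
    intro η k
    have hc : ∀ y : GP r, η (k,1) * y = y * η (k,1) := by
      intro y
      have h1 : ((k,1) : GP r) * η.symm y = η.symm y * (k,1) := by
        refine Prod.ext (mul_comm _ _) ?_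
        show 1 * (η.symm y).2 = (η.symm y).2 * 1
        rw [one_mul, mul_one]
      calc η (k,1) * y = η ((k,1) * η.symm y) := by
            rw [_root_.map_mul, MulEquiv.apply_symm_apply]
        _ = η (η.symm y * (k,1)) := by rw [h1]
        _ = y * η (k,1) := by rw [_root_.map_mul, MulEquiv.apply_symm_apply]
    refine centerF r _ ?_
    intro f
    exact congrArg Prod.snd (hc (1, f))
  set ψ : Multiplicative ℤ →* Multiplicative ℤ :=
    (MonoidHom.fst _ _).comp (θ.toMonoidHom.comp (MonoidHom.inl _ _)) with hψdef
  set ψ' : Multiplicative ℤ →* Multiplicative ℤ :=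
    (MonoidHom.fst _ _).comp ((θ.symm).toMonoidHom.comp (MonoidHom.inl _ _)) with hψ'def
  have hθk : ∀ k, θ (k, 1) = (ψ k, 1) := fun k => Prod.ext rfl (hcent2 θ k)
  have hθk' : ∀ k, θ.symm (k, 1) = (ψ' k, 1) := fun k => Prod.ext rfl (hcent2 θ.symm k)
  have hψψ' : ∀ k, ψ' (ψ k) = k := by
    intro k
    calc ψ' (ψ k) = (θ.symm (ψ k, 1)).1 := rfl
      _ = (θ.symm (θ (k,1))).1 := by rw [hθk]
      _ = k := by rw [MulEquiv.symm_apply_apply]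
  set a : ℤ := toAdd (ψ (ofAdd 1)) with ha
  have haunit : a = 1 ∨ a = -1 := by
    have h1 : ψ' (ψ (ofAdd 1)) = ofAdd 1 := hψψ' _
    rw [show ψ (ofAdd (1:ℤ)) = ofAdd a from rfl, homZ_val] at h1
    have h2 := congrArg toAdd h1
    have h3 : a * toAdd (ψ' (ofAdd 1)) = 1 := h2
    exact Int.isUnit_iff.mp (IsUnit.of_mul_eq_one _ h3)
  set x : Multiplicative (ZMod 2) := if a = 1 then 1 else ofAdd 1 with hx
  have hepsx : ∀ k, epsA x k = ψ k := by
    intro k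
    have hk : k = ofAdd (toAdd k) := rfl
    rcases haunit with h | h
    · rw [hx, if_pos h, epsA_one]
      show k = ψ k
      rw [hk, homZ_val, ← ha, h, mul_one]
    · rw [hx, if_neg (by omega), epsA_s]
      show k⁻¹ = ψ k
      rw [hk, homZ_val, ← ha, h]
      show ofAdd (-(toAdd k)) = ofAdd (toAdd k * (-1))
      congr 1
      ring
  set α0 : FF r →* FF r :=
    (MonoidHom.snd _ _).comp (θ.toMonoidHom.comp (MonoidHom.inr _ _)) with hα0def
  set α0' : FF r →* FF r :=
    (MonoidHom.snd _ _).comp ((θ.symm).toMonoidHom.comp (MonoidHom.inr _ _)) with hα0'def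
  have hsnd : ∀ (c : Multiplicative ℤ) (f : FF r), (θ (c, f)).2 = α0 f := by
    intro c f
    have hdecomp : ((c, f) : GP r) = (c, 1) * (1, f) := Prod.ext (by simp) (by simp)
    rw [hdecomp, _root_.map_mul, hθk]
    show (1 : FF r) * (θ (1,f)).2 = α0 f
    exact one_mul _
  have hsnd' : ∀ (c : Multiplicative ℤ) (f : FF r), (θ.symm (c, f)).2 = α0' f := by
    intro c f
    have hdecomp : ((c, f) : GP r) = (c, 1) * (1, f) := Prod.ext (by simp) (by simp)
    rw [hdecomp, _root_.map_mul, hθk']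
    show (1 : FF r) * (θ.symm (1,f)).2 = α0' f
    exact one_mul _
  have hαα' : ∀ f, α0 (α0' f) = f := by
    intro f
    calc α0 (α0' f) = (θ ((θ.symm (1,f)).1, α0' f)).2 := (hsnd _ _).symm
      _ = (θ (θ.symm (1,f))).2 := by
          have h3 : (((θ.symm (1,f)).1, α0' f) : GP r) = θ.symm (1,f) :=
            Prod.ext rfl (hsnd' 1 f).symm
          rw [h3]
      _ = f := by rw [MulEquiv.apply_symm_apply]
  have hα'α : ∀ f, α0' (α0 f) = f := by
    intro f
    calc α0' (α0 f) = (θ.symm ((θ (1,f)).1, α0 f)).2 := (hsnd' _ _).symm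
      _ = (θ.symm (θ (1,f))).2 := by
          have h3 : (((θ (1,f)).1, α0 f) : GP r) = θ (1,f) :=
            Prod.ext rfl (hsnd 1 f).symm
          rw [h3]
      _ = f := by rw [MulEquiv.symm_apply_apply]
  set α : MulAut (FF r) := MonoidHom.toMulEquiv α0 α0'
    (MonoidHom.ext hα'α) (MonoidHom.ext hαα') with hαdef
  set μ : FF r →* Multiplicative ℤ :=
    (MonoidHom.fst _ _).comp (θ.toMonoidHom.comp (MonoidHom.inr _ _)) with hμdef
  set l : Fin (r+1) → ℤ := fun i => toAdd (μ (α.symm (FreeGroup.of i))) with hl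
  have hlam : ∀ f, lamHat r l (α f) = μ f := by
    have hcomp : lamHat r l = μ.comp ((α.symm : FF r ≃* FF r) : FF r →* FF r) := by
      apply FreeGroup.ext_hom
      intro i
      rw [lamHat_of]
      rfl
    intro f
    rw [hcomp]
    show μ (α.symm (α f)) = μ f
    rw [MulEquiv.symm_apply_apply]
  refine ⟨⟨ofAdd l, (x, α)⟩, ?_⟩
  apply MulEquiv.ext
  rintro ⟨k, f⟩
  rw [bigTheta_apply]
  have hθkf : θ (k, f) = (ψ k * μ f, α0 f) := by
    have hdecomp : ((k, f) : GP r) = (k, 1) * (1, f) := Prod.ext (by simp) (by simp)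
    rw [hdecomp, _root_.map_mul, hθk]
    refine Prod.ext ?_ ?_
    · show ψ k * (θ (1,f)).1 = ψ k * μ f
      rfl
    · show (1 : FF r) * (θ (1,f)).2 = α0 f
      exact one_mul _
  rw [hθkf]
  refine Prod.ext ?_ rfl
  show epsA x k * lamHat r (toAdd (ofAdd l)) (α f) = ψ k * μ f
  rw [hepsx]
  congr 1
  exact hlam f

end Part2Final

/-- For `r ≥ 2`, the pure monomial braid group `P(r,2)` is isomorphic to `ℤ × F_{r+1}`,
where `F_{r+1}` is the free group of rank `r+1`, and
`Aut(P(r,2)) ≅ ℤ^{r+1} ⋊ (ℤ/2ℤ × Aut(F_{r+1}))` for a suitable action of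
`ℤ/2ℤ × Aut(F_{r+1})` on `ℤ^{r+1}`. -/
theorem Pm_r2_iso (r : ℕ) (hr : 2 ≤ r) :
    Nonempty (↥(Pm r 2) ≃* Multiplicative ℤ × FreeGroup (Fin (r + 1))) ∧
    ∃ φ : (Multiplicative (ZMod 2) × MulAut (FreeGroup (Fin (r + 1)))) →*
        MulAut (Multiplicative (Fin (r + 1) → ℤ)),
      Nonempty (MulAut (↥(Pm r 2)) ≃*
        (Multiplicative (Fin (r + 1) → ℤ)) ⋊[φ]
          (Multiplicative (ZMod 2) × MulAut (FreeGroup (Fin (r + 1))))) := by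
  haveI : NeZero r := ⟨by omega⟩
  refine ⟨⟨part1Equiv r⟩, phiAct r, ⟨?_⟩⟩
  exact (MulAut.congr (part1Equiv r)).trans
    (MulEquiv.ofBijective (bigTheta r) ⟨bigTheta_inj r, bigTheta_surj r⟩).symm

end MonomialBraid
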